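/- arXiv:2105.00735 — 4 statements merged into one kernel-verified Lean document; each statement's English description precedes it below -/
import Mathlib

section
/- The axiom system E_S = E_1 ∪ {S, SP1, SP2, EL1} is sound and ground-complete modulo simulation equivalence ∼_S over CCS. -/
/-- Actions: names, co-names and the silent action τ. -/
inductive Act (A : Type) : Type
  | name : A → Act A
  | coname : A → Act A
  | tau : Act A
  deriving DecidableEq

/-- Complementation of actions (`co` of τ is τ; it is only ever used on non-τ actions). -/
def Act.co {A : Type} : Act A → Act A
  | .name a => .coname a
  | .coname a => .name a
  | .tau => .tau

/-- CCS terms: 0, variables, prefixing, choice and parallel composition. -/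
inductive Tm (A : Type) : Type
  | nil : Tm A
  | var : ℕ → Tm A
  | pre : Act A → Tm A → Tm A
  | plus : Tm A → Tm A → Tm A
  | par : Tm A → Tm A → Tm A

/-- The SOS transition relation of CCS. -/
inductive Step {A : Type} : Tm A → Act A → Tm A → Prop
  | pre (μ : Act A) (t : Tm A) : Step (.pre μ t) μ t
  | plusL {t u t' : Tm A} {μ : Act A} : Step t μ t' → Step (.plus t u) μ t'
  | plusR {t u u' : Tm A} {μ : Act A} : Step u μ u' → Step (.plus t u) μ u'
  | parL {t u t' : Tm A} {μ : Act A} : Step t μ t' → Step (.par t u) μ (.par t' u)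
  | parR {t u u' : Tm A} {μ : Act A} : Step u μ u' → Step (.par t u) μ (.par t u')
  | comm {t u t' u' : Tm A} {α : Act A} : α ≠ Act.tau → Step t α t' → Step u α.co u' →
      Step (.par t u) .tau (.par t' u')

/-- A term is closed (a process) if no variable occurs in it. -/
def Closed {A : Type} : Tm A → Prop
  | .nil => True
  | .var _ => False
  | .pre _ t => Closed t
  | .plus t u => Closed t ∧ Closed u
  | .par t u => Closed t ∧ Closed u

/-- Applying a substitution to a term. -/
def subst {A : Type} (σ : ℕ → Tm A) : Tm A → Tm A
  | .nil => .nil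
  | .var x => σ x
  | .pre μ t => .pre μ (subst σ t)
  | .plus t u => .plus (subst σ t) (subst σ u)
  | .par t u => .par (subst σ t) (subst σ u)

/-- A substitution is closed if all its values are closed. -/
def ClosedSubst {A : Type} (σ : ℕ → Tm A) : Prop := ∀ x, Closed (σ x)

/-- `R` is a bisimulation (symmetric, with the transfer property). -/
def IsBisim {A : Type} (R : Tm A → Tm A → Prop) : Prop :=
  (∀ p q, R p q → R q p) ∧
  (∀ p q μ p', R p q → Step p μ p' → ∃ q', Step q μ q' ∧ R p' q')

/-- Bisimilarity: the largest bisimulation. -/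
def Bisim {A : Type} (p q : Tm A) : Prop := ∃ R, IsBisim R ∧ R p q

/-- Equations are pairs of terms. -/
abbrev Eqn (A : Type) := Tm A × Tm A

/-- Derivability in equational logic from the axiom system `E`. -/
inductive Deriv {A : Type} (E : Set (Eqn A)) : Tm A → Tm A → Prop
  | ax {t u : Tm A} (σ : ℕ → Tm A) (h : (t, u) ∈ E) : Deriv E (subst σ t) (subst σ u)
  | refl (t : Tm A) : Deriv E t t
  | symm {t u : Tm A} (h : Deriv E t u) : Deriv E u t
  | trans {t u v : Tm A} (h₁ : Deriv E t u) (h₂ : Deriv E u v) : Deriv E t v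
  | pre (μ : Act A) {t u : Tm A} (h : Deriv E t u) : Deriv E (.pre μ t) (.pre μ u)
  | plus {t u t' u' : Tm A} (h₁ : Deriv E t u) (h₂ : Deriv E t' u') :
      Deriv E (.plus t t') (.plus u u')
  | par {t u t' u' : Tm A} (h₁ : Deriv E t u) (h₂ : Deriv E t' u') :
      Deriv E (.par t t') (.par u u')

/-- An equation is sound modulo `sim` if all its closed instances are related by `sim`. -/
def EqnSound {A : Type} (sim : Tm A → Tm A → Prop) (t u : Tm A) : Prop :=
  ∀ σ : ℕ → Tm A, ClosedSubst σ → sim (subst σ t) (subst σ u)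

/-- An axiom system is sound modulo `sim` if each of its equations is. -/
def SystemSound {A : Type} (sim : Tm A → Tm A → Prop) (E : Set (Eqn A)) : Prop :=
  ∀ e ∈ E, EqnSound sim e.1 e.2

/-- An axiom system is ground-complete modulo `sim` if it derives every valid
closed equation. -/
def GroundComplete {A : Type} (sim : Tm A → Tm A → Prop) (E : Set (Eqn A)) : Prop :=
  ∀ p q : Tm A, Closed p → Closed q → sim p q → Deriv E p q

/-- `sumF g n` is the sum `g 1 + ⋯ + g n` (empty sum being 0, no padding for `n = 1`). -/
def sumF {A : Type} (g : ℕ → Tm A) : ℕ → Tm A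
  | 0 => .nil
  | 1 => g 1
  | n + 2 => .plus (sumF g (n + 1)) (g (n + 2))

/-- The basic axioms A0–A3 for choice (variables `x, y, z` rendered as `var 0, 1, 2`). -/
def E0 (A : Type) : Set (Eqn A) :=
  { (.plus (.var 0) .nil, .var 0),
    (.plus (.var 0) (.var 1), .plus (.var 1) (.var 0)),
    (.plus (.plus (.var 0) (.var 1)) (.var 2), .plus (.var 0) (.plus (.var 1) (.var 2))),
    (.plus (.var 0) (.var 0), .var 0) }

/-- `E₁ = E₀ ∪ {P0 : x ‖ 0 ≈ x, P1 : x ‖ y ≈ y ‖ x}`. -/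
def E1 (A : Type) : Set (Eqn A) :=
  E0 A ∪ { (.par (.var 0) .nil, .var 0),
           (.par (.var 0) (.var 1), .par (.var 1) (.var 0)) }

/-- The axiom schema EL1: `μ.x ‖ ν.y ≈ μ.(x ‖ ν.y) + ν.(μ.x ‖ y)` when `μ`, `ν` are not
complementary, with the extra summand `τ.(x ‖ y)` when `μ = ν̄`. -/
def EL1 (A : Type) : Set (Eqn A) :=
  { e | ∃ μ ν : Act A,
      (¬ (μ ≠ Act.tau ∧ μ = Act.co ν) ∧
        e = (.par (.pre μ (.var 0)) (.pre ν (.var 1)),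
             .plus (.pre μ (.par (.var 0) (.pre ν (.var 1))))
                   (.pre ν (.par (.pre μ (.var 0)) (.var 1))))) ∨
      ((μ ≠ Act.tau ∧ μ = Act.co ν) ∧
        e = (.par (.pre μ (.var 0)) (.pre ν (.var 1)),
             .plus (.plus (.pre μ (.par (.var 0) (.pre ν (.var 1))))
                          (.pre ν (.par (.pre μ (.var 0)) (.var 1))))
                   (.pre .tau (.par (.var 0) (.var 1))))) }

/-- `R` is a simulation. -/
def IsSim {A : Type} (R : Tm A → Tm A → Prop) : Prop :=
  ∀ p q μ p', R p q → Step p μ p' → ∃ q', Step q μ q' ∧ R p' q'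

/-- Simulation equivalence. -/
def SEq {A : Type} (p q : Tm A) : Prop :=
  (∃ R, IsSim R ∧ R p q) ∧ (∃ R, IsSim R ∧ R q p)

/-- The axiom schema S: `μ.(x + y) ≈ μ.(x + y) + μ.x`. -/
def S (A : Type) : Set (Eqn A) :=
  { e | ∃ μ : Act A,
      e = (.pre μ (.plus (.var 0) (.var 1)),
           .plus (.pre μ (.plus (.var 0) (.var 1))) (.pre μ (.var 0))) }

/-- The axiom SP1:
`(x + y) ‖ (z + w) ≈ x ‖ (z + w) + y ‖ (z + w) + (x + y) ‖ z + (x + y) ‖ w`. -/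
def SP1 (A : Type) : Set (Eqn A) :=
  { (.par (.plus (.var 0) (.var 1)) (.plus (.var 2) (.var 3)),
     .plus (.plus (.plus
       (.par (.var 0) (.plus (.var 2) (.var 3)))
       (.par (.var 1) (.plus (.var 2) (.var 3))))
       (.par (.plus (.var 0) (.var 1)) (.var 2)))
       (.par (.plus (.var 0) (.var 1)) (.var 3))) }

/-- The axiom schema SP2: `μ.x ‖ (y + z) ≈ μ.(x ‖ (y + z)) + μ.x ‖ y + μ.x ‖ z`. -/
def SP2 (A : Type) : Set (Eqn A) :=
  { e | ∃ μ : Act A,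
      e = (.par (.pre μ (.var 0)) (.plus (.var 1) (.var 2)),
           .plus (.plus
             (.pre μ (.par (.var 0) (.plus (.var 1) (.var 2))))
             (.par (.pre μ (.var 0)) (.var 1)))
             (.par (.pre μ (.var 0)) (.var 2))) }

/-! ### Auxiliary development -/

section Aux

variable {A : Type}

/-- The simulation preorder. -/
def Sm (p q : Tm A) : Prop := ∃ R, IsSim R ∧ R p q

/-- The full axiom system, named. -/
def ESy (A : Type) : Set (Eqn A) := E1 A ∪ S A ∪ SP1 A ∪ SP2 A ∪ EL1 A

lemma sm_step {p q : Tm A} (h : Sm p q) {μ p'} (hs : Step p μ p') :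
    ∃ q', Step q μ q' ∧ Sm p' q' := by
  obtain ⟨R, hR, hpq⟩ := h
  obtain ⟨q', hq, hR'⟩ := hR p q μ p' hpq hs
  exact ⟨q', hq, R, hR, hR'⟩

lemma sm_fold {p q : Tm A}
    (h : ∀ μ p', Step p μ p' → ∃ q', Step q μ q' ∧ Sm p' q') : Sm p q := by
  refine ⟨fun a b => Sm a b ∨ (a = p ∧ b = q), ?_, Or.inr ⟨rfl, rfl⟩⟩
  rintro a b μ a' (hab | ⟨rfl, rfl⟩) ha
  · obtain ⟨b', hb, h'⟩ := sm_step hab ha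
    exact ⟨b', hb, Or.inl h'⟩
  · obtain ⟨q', hq, h'⟩ := h μ a' ha
    exact ⟨q', hq, Or.inl h'⟩

lemma sm_refl (p : Tm A) : Sm p p :=
  ⟨Eq, by rintro a b μ a' rfl hs; exact ⟨a', hs, rfl⟩, rfl⟩

lemma sm_trans {p q r : Tm A} (h1 : Sm p q) (h2 : Sm q r) : Sm p r := by
  refine ⟨fun a c => ∃ b, Sm a b ∧ Sm b c, ?_, q, h1, h2⟩
  rintro a c μ a' ⟨b, hab, hbc⟩ ha
  obtain ⟨b', hb, h1'⟩ := sm_step hab ha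
  obtain ⟨c', hc, h2'⟩ := sm_step hbc hb
  exact ⟨c', hc, b', h1', h2'⟩

lemma nil_nostep {μ : Act A} {p : Tm A} (h : Step .nil μ p) : False := by cases h

lemma step_pre {μ ν : Act A} {t r : Tm A} (h : Step (.pre μ t) ν r) : ν = μ ∧ r = t := by
  cases h; exact ⟨rfl, rfl⟩

lemma step_plus {t u r : Tm A} {μ} (h : Step (.plus t u) μ r) : Step t μ r ∨ Step u μ r := by
  cases h with
  | plusL h => exact Or.inl h
  | plusR h => exact Or.inr h

lemma step_par {t u r : Tm A} {μ} (h : Step (.par t u) μ r) :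
    (∃ t', Step t μ t' ∧ r = .par t' u) ∨ (∃ u', Step u μ u' ∧ r = .par t u') ∨
    (μ = Act.tau ∧ ∃ α t' u', α ≠ Act.tau ∧ Step t α t' ∧ Step u α.co u' ∧ r = .par t' u') := by
  cases h with
  | parL h => exact Or.inl ⟨_, h, rfl⟩
  | parR h => exact Or.inr (Or.inl ⟨_, h, rfl⟩)
  | comm hα h1 h2 => exact Or.inr (Or.inr ⟨rfl, _, _, _, hα, h1, h2, rfl⟩)

lemma co_co (α : Act A) : α.co.co = α := by cases α <;> rfl

lemma co_ne_tau {α : Act A} (h : α ≠ Act.tau) : α.co ≠ Act.tau := by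
  cases α with
  | tau => exact absurd rfl h
  | name a => intro hc; cases hc
  | coname a => intro hc; cases hc

/-! #### Basic simulation laws -/

lemma sm_plusL (t u : Tm A) : Sm t (.plus t u) :=
  sm_fold fun _ p' h => ⟨p', Step.plusL h, sm_refl _⟩

lemma sm_plusR (t u : Tm A) : Sm u (.plus t u) :=
  sm_fold fun _ p' h => ⟨p', Step.plusR h, sm_refl _⟩

lemma sm_lub {t u v : Tm A} (h1 : Sm t v) (h2 : Sm u v) : Sm (.plus t u) v :=
  sm_fold fun _ p' h => by
    rcases step_plus h with h | h
    · exact sm_step h1 h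
    · exact sm_step h2 h

lemma sm_nil_any (t : Tm A) : Sm .nil t :=
  sm_fold fun _ _ h => (nil_nostep h).elim

lemma sm_pre_mono (μ : Act A) {t u : Tm A} (h : Sm t u) : Sm (.pre μ t) (.pre μ u) :=
  sm_fold fun ν p' hs => by
    obtain ⟨rfl, rfl⟩ := step_pre hs
    exact ⟨u, Step.pre ν u, h⟩

lemma sm_plus_mono {t t' u u' : Tm A} (h1 : Sm t t') (h2 : Sm u u') :
    Sm (.plus t u) (.plus t' u') :=
  sm_lub (sm_trans h1 (sm_plusL t' u')) (sm_trans h2 (sm_plusR t' u'))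

lemma sm_par_mono {t t' u u' : Tm A} (h1 : Sm t t') (h2 : Sm u u') :
    Sm (.par t u) (.par t' u') := by
  refine ⟨fun a b => ∃ x y x' y', Sm x x' ∧ Sm y y' ∧ a = .par x y ∧ b = .par x' y', ?_,
    t, u, t', u', h1, h2, rfl, rfl⟩
  rintro a b μ a' ⟨x, y, x', y', hx, hy, rfl, rfl⟩ hs
  rcases step_par hs with ⟨p', hp, rfl⟩ | ⟨q', hq, rfl⟩ | ⟨rfl, α, p', q', hα, hp, hq, rfl⟩
  · obtain ⟨x'', hx', h'⟩ := sm_step hx hp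
    exact ⟨.par x'' y', Step.parL hx', p', y, x'', y', h', hy, rfl, rfl⟩
  · obtain ⟨y'', hy', h'⟩ := sm_step hy hq
    exact ⟨.par x' y'', Step.parR hy', x, q', x', y'', hx, h', rfl, rfl⟩
  · obtain ⟨x'', hx', hx2⟩ := sm_step hx hp
    obtain ⟨y'', hy', hy2⟩ := sm_step hy hq
    exact ⟨.par x'' y'', Step.comm hα hx' hy', p', q', x'', y'', hx2, hy2, rfl, rfl⟩

lemma sm_par_comm (t u : Tm A) : Sm (.par t u) (.par u t) := by
  refine ⟨fun a b => ∃ x y, a = .par x y ∧ b = .par y x, ?_, t, u, rfl, rfl⟩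
  rintro a b μ a' ⟨x, y, rfl, rfl⟩ hs
  rcases step_par hs with ⟨p', hp, rfl⟩ | ⟨q', hq, rfl⟩ | ⟨rfl, α, p', q', hα, hp, hq, rfl⟩
  · exact ⟨.par y p', Step.parR hp, p', y, rfl, rfl⟩
  · exact ⟨.par q' x, Step.parL hq, x, q', rfl, rfl⟩
  · refine ⟨.par q' p', Step.comm (co_ne_tau hα) hq ?_, p', q', rfl, rfl⟩
    rw [co_co]; exact hp

lemma sm_par_nil (t : Tm A) : Sm (.par t .nil) t := by
  refine ⟨fun a b => a = .par b .nil, ?_, rfl⟩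
  rintro a b μ a' rfl hs
  rcases step_par hs with ⟨p', hp, rfl⟩ | ⟨q', hq, _⟩ | ⟨_, α, p', q', _, _, hq, _⟩
  · exact ⟨p', hp, rfl⟩
  · exact (nil_nostep hq).elim
  · exact (nil_nostep hq).elim

lemma sm_nil_par (t : Tm A) : Sm t (.par t .nil) := by
  refine ⟨fun a b => b = .par a .nil, ?_, rfl⟩
  rintro a b μ a' rfl hs
  exact ⟨.par a' .nil, Step.parL hs, rfl⟩

lemma sm_assoc1 (x y z : Tm A) : Sm (.plus (.plus x y) z) (.plus x (.plus y z)) :=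
  sm_lub (sm_lub (sm_plusL _ _) (sm_trans (sm_plusL y z) (sm_plusR x _)))
    (sm_trans (sm_plusR y z) (sm_plusR x _))

lemma sm_assoc2 (x y z : Tm A) : Sm (.plus x (.plus y z)) (.plus (.plus x y) z) :=
  sm_lub (sm_trans (sm_plusL x y) (sm_plusL _ z))
    (sm_lub (sm_trans (sm_plusR x y) (sm_plusL _ z)) (sm_plusR _ z))

/-! #### Soundness of the expansion laws -/

lemma sm_sp1_lr (x y z w : Tm A) :
    Sm (.par (.plus x y) (.plus z w))
      (.plus (.plus (.plus (.par x (.plus z w)) (.par y (.plus z w)))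
        (.par (.plus x y) z)) (.par (.plus x y) w)) :=
  sm_fold fun μ r hs => by
    rcases step_par hs with ⟨p', hp, rfl⟩ | ⟨q', hq, rfl⟩ | ⟨rfl, α, p', q', hα, hp, hq, rfl⟩
    · rcases step_plus hp with h | h
      · exact ⟨_, .plusL (.plusL (.plusL (.parL h))), sm_refl _⟩
      · exact ⟨_, .plusL (.plusL (.plusR (.parL h))), sm_refl _⟩
    · rcases step_plus hq with h | h
      · exact ⟨_, .plusL (.plusR (.parR h)), sm_refl _⟩
      · exact ⟨_, .plusR (.parR h), sm_refl _⟩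
    · rcases step_plus hp with h | h
      · exact ⟨_, .plusL (.plusL (.plusL (.comm hα h hq))), sm_refl _⟩
      · exact ⟨_, .plusL (.plusL (.plusR (.comm hα h hq))), sm_refl _⟩

lemma sm_sp1_rl (x y z w : Tm A) :
    Sm (.plus (.plus (.plus (.par x (.plus z w)) (.par y (.plus z w)))
        (.par (.plus x y) z)) (.par (.plus x y) w))
      (.par (.plus x y) (.plus z w)) :=
  sm_lub (sm_lub (sm_lub (sm_par_mono (sm_plusL x y) (sm_refl _))
    (sm_par_mono (sm_plusR x y) (sm_refl _)))
    (sm_par_mono (sm_refl _) (sm_plusL z w)))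
    (sm_par_mono (sm_refl _) (sm_plusR z w))

lemma sm_sp2_lr (μ : Act A) (x y z : Tm A) :
    Sm (.par (.pre μ x) (.plus y z))
      (.plus (.plus (.pre μ (.par x (.plus y z))) (.par (.pre μ x) y)) (.par (.pre μ x) z)) :=
  sm_fold fun ν r hs => by
    rcases step_par hs with ⟨p', hp, rfl⟩ | ⟨q', hq, rfl⟩ | ⟨rfl, α, p', q', hα, hp, hq, rfl⟩
    · obtain ⟨rfl, rfl⟩ := step_pre hp
      exact ⟨_, .plusL (.plusL (.pre _ _)), sm_refl _⟩
    · rcases step_plus hq with h | h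
      · exact ⟨_, .plusL (.plusR (.parR h)), sm_refl _⟩
      · exact ⟨_, .plusR (.parR h), sm_refl _⟩
    · obtain ⟨rfl, rfl⟩ := step_pre hp
      rcases step_plus hq with h | h
      · exact ⟨_, .plusL (.plusR (.comm hα (.pre _ _) h)), sm_refl _⟩
      · exact ⟨_, .plusR (.comm hα (.pre _ _) h), sm_refl _⟩

lemma sm_pre_par (μ : Act A) (x u : Tm A) :
    Sm (.pre μ (.par x u)) (.par (.pre μ x) u) :=
  sm_fold fun ν r hs => by
    obtain ⟨rfl, rfl⟩ := step_pre hs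
    exact ⟨_, .parL (.pre _ _), sm_refl _⟩

lemma sm_pre_parR (ν : Act A) (t y : Tm A) :
    Sm (.pre ν (.par t y)) (.par t (.pre ν y)) :=
  sm_fold fun ρ r hs => by
    obtain ⟨rfl, rfl⟩ := step_pre hs
    exact ⟨_, .parR (.pre _ _), sm_refl _⟩

lemma sm_sp2_rl (μ : Act A) (x y z : Tm A) :
    Sm (.plus (.plus (.pre μ (.par x (.plus y z))) (.par (.pre μ x) y)) (.par (.pre μ x) z))
      (.par (.pre μ x) (.plus y z)) :=
  sm_lub (sm_lub (sm_pre_par μ x _) (sm_par_mono (sm_refl _) (sm_plusL y z)))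
    (sm_par_mono (sm_refl _) (sm_plusR y z))

lemma sm_el1n_lr {μ ν : Act A} (h : ¬(μ ≠ Act.tau ∧ μ = Act.co ν)) (x y : Tm A) :
    Sm (.par (.pre μ x) (.pre ν y))
      (.plus (.pre μ (.par x (.pre ν y))) (.pre ν (.par (.pre μ x) y))) :=
  sm_fold fun ρ r hs => by
    rcases step_par hs with ⟨p', hp, rfl⟩ | ⟨q', hq, rfl⟩ | ⟨rfl, α, p', q', hα, hp, hq, rfl⟩
    · obtain ⟨rfl, rfl⟩ := step_pre hp
      exact ⟨_, .plusL (.pre _ _), sm_refl _⟩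
    · obtain ⟨rfl, rfl⟩ := step_pre hq
      exact ⟨_, .plusR (.pre _ _), sm_refl _⟩
    · obtain ⟨rfl, rfl⟩ := step_pre hp
      obtain ⟨he, rfl⟩ := step_pre hq
      exact absurd ⟨hα, by rw [← he, co_co]⟩ h

lemma sm_el1n_rl (μ ν : Act A) (x y : Tm A) :
    Sm (.plus (.pre μ (.par x (.pre ν y))) (.pre ν (.par (.pre μ x) y)))
      (.par (.pre μ x) (.pre ν y)) :=
  sm_lub (sm_pre_par μ x _) (sm_pre_parR ν _ y)

lemma sm_el1c_lr (μ ν : Act A) (x y : Tm A) :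
    Sm (.par (.pre μ x) (.pre ν y))
      (.plus (.plus (.pre μ (.par x (.pre ν y))) (.pre ν (.par (.pre μ x) y)))
        (.pre .tau (.par x y))) :=
  sm_fold fun ρ r hs => by
    rcases step_par hs with ⟨p', hp, rfl⟩ | ⟨q', hq, rfl⟩ | ⟨rfl, α, p', q', hα, hp, hq, rfl⟩
    · obtain ⟨rfl, rfl⟩ := step_pre hp
      exact ⟨_, .plusL (.plusL (.pre _ _)), sm_refl _⟩
    · obtain ⟨rfl, rfl⟩ := step_pre hq
      exact ⟨_, .plusL (.plusR (.pre _ _)), sm_refl _⟩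
    · obtain ⟨rfl, rfl⟩ := step_pre hp
      obtain ⟨he, rfl⟩ := step_pre hq
      exact ⟨_, .plusR (.pre _ _), sm_refl _⟩

lemma sm_el1c_rl {μ ν : Act A} (h : μ ≠ Act.tau ∧ μ = Act.co ν) (x y : Tm A) :
    Sm (.plus (.plus (.pre μ (.par x (.pre ν y))) (.pre ν (.par (.pre μ x) y)))
        (.pre .tau (.par x y)))
      (.par (.pre μ x) (.pre ν y)) := by
  refine sm_lub (sm_lub (sm_pre_par μ x _) (sm_pre_parR ν _ y)) ?_
  refine sm_fold fun ρ r hs => ?_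
  obtain ⟨rfl, rfl⟩ := step_pre hs
  refine ⟨_, Step.comm h.1 (Step.pre μ x) ?_, sm_refl _⟩
  show Step (.pre ν y) μ.co y
  rw [h.2, co_co]
  exact Step.pre ν y

end Aux
section Aux2

variable {A : Type}

/-! #### Simulation equivalence helpers -/

lemma seq_of {p q : Tm A} (h1 : Sm p q) (h2 : Sm q p) : SEq p q := ⟨h1, h2⟩

lemma seq_refl (p : Tm A) : SEq p p := ⟨sm_refl p, sm_refl p⟩

lemma seq_symm {p q : Tm A} (h : SEq p q) : SEq q p := ⟨h.2, h.1⟩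

lemma seq_trans {p q r : Tm A} (h1 : SEq p q) (h2 : SEq q r) : SEq p r :=
  ⟨sm_trans h1.1 h2.1, sm_trans h2.2 h1.2⟩

lemma seq_pre (μ : Act A) {p q : Tm A} (h : SEq p q) : SEq (.pre μ p) (.pre μ q) :=
  ⟨sm_pre_mono μ h.1, sm_pre_mono μ h.2⟩

lemma seq_plus {p q p' q' : Tm A} (h1 : SEq p q) (h2 : SEq p' q') :
    SEq (.plus p p') (.plus q q') :=
  ⟨sm_plus_mono h1.1 h2.1, sm_plus_mono h1.2 h2.2⟩

lemma seq_par {p q p' q' : Tm A} (h1 : SEq p q) (h2 : SEq p' q') :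
    SEq (.par p p') (.par q q') :=
  ⟨sm_par_mono h1.1 h2.1, sm_par_mono h1.2 h2.2⟩

/-! #### Soundness of all axioms -/

lemma sound_all (A : Type) (e : Eqn A) (he : e ∈ ESy A) (σ : ℕ → Tm A) :
    SEq (subst σ e.1) (subst σ e.2) := by
  simp only [ESy, Set.mem_union] at he
  obtain ((((he | he) | he) | he) | he) := he
  · -- E1
    simp only [E1, Set.mem_union] at he
    obtain he | he := he
    · -- E0
      simp only [E0, Set.mem_insert_iff, Set.mem_singleton_iff] at he
      obtain rfl | rfl | rfl | rfl := he
      · exact ⟨sm_lub (sm_refl _) (sm_nil_any _), sm_plusL _ _⟩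
      · exact ⟨sm_lub (sm_plusR _ _) (sm_plusL _ _), sm_lub (sm_plusR _ _) (sm_plusL _ _)⟩
      · exact ⟨sm_assoc1 _ _ _, sm_assoc2 _ _ _⟩
      · exact ⟨sm_lub (sm_refl _) (sm_refl _), sm_plusL _ _⟩
    · simp only [Set.mem_insert_iff, Set.mem_singleton_iff] at he
      obtain rfl | rfl := he
      · exact ⟨sm_par_nil _, sm_nil_par _⟩
      · exact ⟨sm_par_comm _ _, sm_par_comm _ _⟩
  · -- S
    simp only [S, Set.mem_setOf_eq] at he
    obtain ⟨μ, rfl⟩ := he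
    exact ⟨sm_plusL _ _, sm_lub (sm_refl _) (sm_pre_mono μ (sm_plusL _ _))⟩
  · -- SP1
    simp only [SP1, Set.mem_singleton_iff] at he
    subst he
    exact ⟨sm_sp1_lr _ _ _ _, sm_sp1_rl _ _ _ _⟩
  · -- SP2
    simp only [SP2, Set.mem_setOf_eq] at he
    obtain ⟨μ, rfl⟩ := he
    exact ⟨sm_sp2_lr μ _ _ _, sm_sp2_rl μ _ _ _⟩
  · -- EL1
    simp only [EL1, Set.mem_setOf_eq] at he
    obtain ⟨μ, ν, he⟩ := he
    rcases he with ⟨hn, rfl⟩ | ⟨hc, rfl⟩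
    · exact ⟨sm_el1n_lr hn _ _, sm_el1n_rl μ ν _ _⟩
    · exact ⟨sm_el1c_lr μ ν _ _, sm_el1c_rl hc _ _⟩

/-! #### Soundness of derivations -/

lemma subst_subst (σ ρ : ℕ → Tm A) (t : Tm A) :
    subst σ (subst ρ t) = subst (fun n => subst σ (ρ n)) t := by
  induction t <;> simp [subst, *]

lemma deriv_sound {E : Set (Eqn A)}
    (hE : ∀ e ∈ E, ∀ σ : ℕ → Tm A, SEq (subst σ e.1) (subst σ e.2))
    {t u : Tm A} (h : Deriv E t u) : ∀ σ, SEq (subst σ t) (subst σ u) := by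
  induction h with
  | ax σ' hm => intro σ; rw [subst_subst, subst_subst]; exact hE _ hm _
  | refl t => exact fun σ => seq_refl _
  | symm _ IH => exact fun σ => seq_symm (IH σ)
  | trans _ _ IH1 IH2 => exact fun σ => seq_trans (IH1 σ) (IH2 σ)
  | pre μ _ IH => exact fun σ => seq_pre μ (IH σ)
  | plus _ _ IH1 IH2 => exact fun σ => seq_plus (IH1 σ) (IH2 σ)
  | par _ _ IH1 IH2 => exact fun σ => seq_par (IH1 σ) (IH2 σ)

/-! #### Derivation helpers for the concrete axiom system -/

/-- Substitution from a list. -/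
def sb (l : List (Tm A)) : ℕ → Tm A := fun n => l.getD n .nil

lemma mem_ES_E1 {e : Eqn A} (h : e ∈ E1 A) : e ∈ ESy A :=
  Set.mem_union_left _ (Set.mem_union_left _ (Set.mem_union_left _ (Set.mem_union_left _ h)))

lemma mem_ES_S {e : Eqn A} (h : e ∈ S A) : e ∈ ESy A :=
  Set.mem_union_left _ (Set.mem_union_left _ (Set.mem_union_left _ (Set.mem_union_right _ h)))

lemma mem_ES_SP1 {e : Eqn A} (h : e ∈ SP1 A) : e ∈ ESy A :=
  Set.mem_union_left _ (Set.mem_union_left _ (Set.mem_union_right _ h))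

lemma mem_ES_SP2 {e : Eqn A} (h : e ∈ SP2 A) : e ∈ ESy A :=
  Set.mem_union_left _ (Set.mem_union_right _ h)

lemma mem_ES_EL1 {e : Eqn A} (h : e ∈ EL1 A) : e ∈ ESy A :=
  Set.mem_union_right _ h

lemma dA0 (t : Tm A) : Deriv (ESy A) (.plus t .nil) t :=
  Deriv.ax (E := ESy A) (t := .plus (.var 0) .nil) (u := .var 0) (sb [t])
    (mem_ES_E1 (Set.mem_union_left _ (by simp [E0])))

lemma dcomm (t u : Tm A) : Deriv (ESy A) (.plus t u) (.plus u t) :=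
  Deriv.ax (E := ESy A) (t := .plus (.var 0) (.var 1)) (u := .plus (.var 1) (.var 0)) (sb [t, u])
    (mem_ES_E1 (Set.mem_union_left _ (by simp [E0])))

lemma dassoc (t u v : Tm A) : Deriv (ESy A) (.plus (.plus t u) v) (.plus t (.plus u v)) :=
  Deriv.ax (E := ESy A) (t := .plus (.plus (.var 0) (.var 1)) (.var 2)) (u := .plus (.var 0) (.plus (.var 1) (.var 2))) (sb [t, u, v])
    (mem_ES_E1 (Set.mem_union_left _ (by simp [E0])))

lemma didem (t : Tm A) : Deriv (ESy A) (.plus t t) t :=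
  Deriv.ax (E := ESy A) (t := .plus (.var 0) (.var 0)) (u := .var 0) (sb [t])
    (mem_ES_E1 (Set.mem_union_left _ (by simp [E0])))

lemma dP0 (t : Tm A) : Deriv (ESy A) (.par t .nil) t :=
  Deriv.ax (E := ESy A) (t := .par (.var 0) .nil) (u := .var 0) (sb [t])
    (mem_ES_E1 (Set.mem_union_right _ (by simp)))

lemma dP1 (t u : Tm A) : Deriv (ESy A) (.par t u) (.par u t) :=
  Deriv.ax (E := ESy A) (t := .par (.var 0) (.var 1)) (u := .par (.var 1) (.var 0)) (sb [t, u])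
    (mem_ES_E1 (Set.mem_union_right _ (by simp)))

lemma dS (μ : Act A) (x y : Tm A) :
    Deriv (ESy A) (.pre μ (.plus x y)) (.plus (.pre μ (.plus x y)) (.pre μ x)) :=
  Deriv.ax (E := ESy A) (sb [x, y]) (mem_ES_S ⟨μ, rfl⟩)

lemma dSP1 (x y z w : Tm A) :
    Deriv (ESy A) (.par (.plus x y) (.plus z w))
      (.plus (.plus (.plus (.par x (.plus z w)) (.par y (.plus z w)))
        (.par (.plus x y) z)) (.par (.plus x y) w)) :=
  Deriv.ax (E := ESy A) (sb [x, y, z, w]) (mem_ES_SP1 rfl)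

lemma dSP2 (μ : Act A) (x y z : Tm A) :
    Deriv (ESy A) (.par (.pre μ x) (.plus y z))
      (.plus (.plus (.pre μ (.par x (.plus y z))) (.par (.pre μ x) y)) (.par (.pre μ x) z)) :=
  Deriv.ax (E := ESy A) (sb [x, y, z]) (mem_ES_SP2 ⟨μ, rfl⟩)

lemma dEL1n {μ ν : Act A} (h : ¬(μ ≠ Act.tau ∧ μ = Act.co ν)) (x y : Tm A) :
    Deriv (ESy A) (.par (.pre μ x) (.pre ν y))
      (.plus (.pre μ (.par x (.pre ν y))) (.pre ν (.par (.pre μ x) y))) :=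
  Deriv.ax (E := ESy A) (sb [x, y]) (mem_ES_EL1 ⟨μ, ν, Or.inl ⟨h, rfl⟩⟩)

lemma dEL1c {μ ν : Act A} (h : μ ≠ Act.tau ∧ μ = Act.co ν) (x y : Tm A) :
    Deriv (ESy A) (.par (.pre μ x) (.pre ν y))
      (.plus (.plus (.pre μ (.par x (.pre ν y))) (.pre ν (.par (.pre μ x) y)))
        (.pre .tau (.par x y))) :=
  Deriv.ax (E := ESy A) (sb [x, y]) (mem_ES_EL1 ⟨μ, ν, Or.inr ⟨h, rfl⟩⟩)

end Aux2
section Aux3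

variable {A : Type}

/-! #### Normal forms -/

/-- Sum forms: terms built from 0, prefixing and choice only. -/
def SumForm : Tm A → Prop
  | .nil => True
  | .var _ => False
  | .pre _ t => SumForm t
  | .plus t u => SumForm t ∧ SumForm u
  | .par _ _ => False

lemma sumform_closed : ∀ {t : Tm A}, SumForm t → Closed t := by
  intro t
  induction t with
  | nil => exact fun _ => trivial
  | var x => exact fun h => h.elim
  | pre μ t IH => exact fun h => IH h
  | plus t u IH1 IH2 => exact fun h => ⟨IH1 h.1, IH2 h.2⟩
  | par t u IH1 IH2 => exact fun h => h.elim

lemma subst_closed (σ : ℕ → Tm A) : ∀ t : Tm A, Closed t → subst σ t = t := by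
  intro t
  induction t with
  | nil => intro _; rfl
  | var x => intro h; exact h.elim
  | pre μ t IH => intro h; simp only [subst]; rw [IH h]
  | plus t u IH1 IH2 => rintro ⟨h1, h2⟩; simp only [subst]; rw [IH1 h1, IH2 h2]
  | par t u IH1 IH2 => rintro ⟨h1, h2⟩; simp only [subst]; rw [IH1 h1, IH2 h2]

/-- Size of a term. -/
def sz : Tm A → ℕ
  | .nil => 1
  | .var _ => 1
  | .pre _ t => sz t + 1
  | .plus t u => sz t + sz u + 1
  | .par t u => sz t + sz u + 1

lemma sz_pos (t : Tm A) : 1 ≤ sz t := by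
  cases t <;> (simp only [sz]; omega)

/-- Every step of a sum form leads to a sum form, and the prefixed residual
is an absorbable summand. -/
lemma sumform_step : ∀ {q : Tm A} {μ q'}, Step q μ q' → SumForm q →
    SumForm q' ∧ Deriv (ESy A) q (.plus q (.pre μ q')) := by
  intro q μ q' h
  induction h with
  | pre ν t => exact fun hq => ⟨hq, (didem (.pre ν t)).symm⟩
  | plusL h IH =>
    rintro ⟨h1, h2⟩
    obtain ⟨hs, hd⟩ := IH h1
    refine ⟨hs, ?_⟩
    refine (Deriv.plus hd (Deriv.refl _)).trans ((dassoc _ _ _).trans ?_)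
    exact (Deriv.plus (Deriv.refl _) (dcomm _ _)).trans (dassoc _ _ _).symm
  | plusR h IH =>
    rintro ⟨h1, h2⟩
    obtain ⟨hs, hd⟩ := IH h2
    refine ⟨hs, ?_⟩
    exact (Deriv.plus (Deriv.refl _) hd).trans (dassoc _ _ _).symm
  | parL h IH => exact fun hq => hq.elim
  | parR h IH => exact fun hq => hq.elim
  | comm hα h1 h2 IH1 IH2 => exact fun hq => hq.elim

/-- Key completeness lemma: a simulated sum form is an absorbable summand. -/
lemma main_complete : ∀ p : Tm A, SumForm p → ∀ q, SumForm q → Sm p q →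
    Deriv (ESy A) (.plus p q) q := by
  intro p
  induction p with
  | nil => intro _ q _ _; exact (dcomm _ _).trans (dA0 q)
  | var x => intro h; exact h.elim
  | pre μ t IH =>
    intro hp q hq hs
    obtain ⟨q', hstep, hs'⟩ := sm_step hs (Step.pre μ t)
    obtain ⟨hq', hd⟩ := sumform_step hstep hq
    have h1 : Deriv (ESy A) (.plus t q') q' := IH hp q' hq' hs'
    have h2 : Deriv (ESy A) (.pre μ q') (.plus (.pre μ q') (.pre μ t)) :=
      ((Deriv.pre μ h1).symm).trans
        ((dS μ t q').trans (Deriv.plus (Deriv.pre μ h1) (Deriv.refl _)))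
    have h3 : Deriv (ESy A) q (.plus q (.pre μ t)) :=
      hd.trans ((Deriv.plus (Deriv.refl q) h2).trans
        ((dassoc q _ _).symm.trans (Deriv.plus hd.symm (Deriv.refl _))))
    exact (dcomm _ _).trans h3.symm
  | plus t u IH1 IH2 =>
    rintro ⟨h1, h2⟩ q hq hs
    have hs1 : Sm t q := sm_trans (sm_plusL t u) hs
    have hs2 : Sm u q := sm_trans (sm_plusR t u) hs
    exact (dassoc t u q).trans
      ((Deriv.plus (Deriv.refl t) (IH2 h2 q hq hs2)).trans (IH1 h1 q hq hs1))
  | par t u IH1 IH2 => intro h; exact h.elim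

/-- Parallel compositions of sum forms normalize. -/
lemma parnf : ∀ k (m n : Tm A), sz m + sz n ≤ k → SumForm m → SumForm n →
    ∃ r, SumForm r ∧ Deriv (ESy A) (.par m n) r := by
  intro k
  induction k with
  | zero =>
    intro m n h _ _
    exact absurd h (by have := sz_pos m; have := sz_pos n; omega)
  | succ k IH =>
    intro m n hk hm hn
    cases m with
    | nil => exact ⟨n, hn, (dP1 _ _).trans (dP0 n)⟩
    | var x => exact hm.elim
    | par a b => exact hm.elim
    | pre μ t =>
      cases n with
      | nil => exact ⟨.pre μ t, hm, dP0 _⟩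
      | var x => exact hn.elim
      | par a b => exact hn.elim
      | pre ν u =>
        obtain ⟨r1, hr1, hd1⟩ := IH t (.pre ν u)
          (by simp only [sz] at hk ⊢; omega) hm hn
        obtain ⟨r2, hr2, hd2⟩ := IH (.pre μ t) u
          (by simp only [sz] at hk ⊢; omega) hm hn
        by_cases hc : μ ≠ Act.tau ∧ μ = Act.co ν
        · obtain ⟨r3, hr3, hd3⟩ := IH t u
            (by simp only [sz] at hk ⊢; omega) hm hn
          exact ⟨.plus (.plus (.pre μ r1) (.pre ν r2)) (.pre .tau r3),
            ⟨⟨hr1, hr2⟩, hr3⟩,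
            (dEL1c hc t u).trans (Deriv.plus
              (Deriv.plus (Deriv.pre μ hd1) (Deriv.pre ν hd2)) (Deriv.pre _ hd3))⟩
        · exact ⟨.plus (.pre μ r1) (.pre ν r2), ⟨hr1, hr2⟩,
            (dEL1n hc t u).trans (Deriv.plus (Deriv.pre μ hd1) (Deriv.pre ν hd2))⟩
      | plus u v =>
        obtain ⟨r1, hr1, hd1⟩ := IH t (.plus u v)
          (by simp only [sz] at hk ⊢; omega) hm hn
        obtain ⟨r2, hr2, hd2⟩ := IH (.pre μ t) u
          (by have := sz_pos v; simp only [sz] at hk ⊢; omega) hm hn.1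
        obtain ⟨r3, hr3, hd3⟩ := IH (.pre μ t) v
          (by have := sz_pos u; simp only [sz] at hk ⊢; omega) hm hn.2
        exact ⟨.plus (.plus (.pre μ r1) r2) r3, ⟨⟨hr1, hr2⟩, hr3⟩,
          (dSP2 μ t u v).trans (Deriv.plus (Deriv.plus (Deriv.pre μ hd1) hd2) hd3)⟩
    | plus a b =>
      cases n with
      | nil => exact ⟨.plus a b, hm, dP0 _⟩
      | var x => exact hn.elim
      | par c d => exact hn.elim
      | pre ν u =>
        obtain ⟨r1, hr1, hd1⟩ := IH u (.plus a b)
          (by simp only [sz] at hk ⊢; omega) hn hm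
        obtain ⟨r2, hr2, hd2⟩ := IH (.pre ν u) a
          (by have := sz_pos b; simp only [sz] at hk ⊢; omega) hn hm.1
        obtain ⟨r3, hr3, hd3⟩ := IH (.pre ν u) b
          (by have := sz_pos a; simp only [sz] at hk ⊢; omega) hn hm.2
        exact ⟨.plus (.plus (.pre ν r1) r2) r3, ⟨⟨hr1, hr2⟩, hr3⟩,
          (dP1 _ _).trans ((dSP2 ν u a b).trans
            (Deriv.plus (Deriv.plus (Deriv.pre ν hd1) hd2) hd3))⟩
      | plus c d =>
        obtain ⟨r1, hr1, hd1⟩ := IH a (.plus c d)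
          (by have := sz_pos b; simp only [sz] at hk ⊢; omega) hm.1 hn
        obtain ⟨r2, hr2, hd2⟩ := IH b (.plus c d)
          (by have := sz_pos a; simp only [sz] at hk ⊢; omega) hm.2 hn
        obtain ⟨r3, hr3, hd3⟩ := IH (.plus a b) c
          (by have := sz_pos d; simp only [sz] at hk ⊢; omega) hm hn.1
        obtain ⟨r4, hr4, hd4⟩ := IH (.plus a b) d
          (by have := sz_pos c; simp only [sz] at hk ⊢; omega) hm hn.2
        exact ⟨.plus (.plus (.plus r1 r2) r3) r4, ⟨⟨⟨hr1, hr2⟩, hr3⟩, hr4⟩,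
          (dSP1 a b c d).trans (Deriv.plus (Deriv.plus (Deriv.plus hd1 hd2) hd3) hd4)⟩

/-- Every process is provably equal to a sum form. -/
lemma nf : ∀ p : Tm A, Closed p → ∃ n, SumForm n ∧ Deriv (ESy A) p n := by
  intro p
  induction p with
  | nil => exact fun _ => ⟨.nil, trivial, Deriv.refl _⟩
  | var x => intro h; exact h.elim
  | pre μ t IH =>
    intro h
    obtain ⟨n, hn, hd⟩ := IH h
    exact ⟨.pre μ n, hn, Deriv.pre μ hd⟩
  | plus t u IH1 IH2 =>
    rintro ⟨h1, h2⟩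
    obtain ⟨n1, hn1, hd1⟩ := IH1 h1
    obtain ⟨n2, hn2, hd2⟩ := IH2 h2
    exact ⟨.plus n1 n2, ⟨hn1, hn2⟩, Deriv.plus hd1 hd2⟩
  | par t u IH1 IH2 =>
    rintro ⟨h1, h2⟩
    obtain ⟨n1, hn1, hd1⟩ := IH1 h1
    obtain ⟨n2, hn2, hd2⟩ := IH2 h2
    obtain ⟨r, hr, hd⟩ := parnf (sz n1 + sz n2) n1 n2 le_rfl hn1 hn2
    exact ⟨r, hr, (Deriv.par hd1 hd2).trans hd⟩

end Aux3

/-- **Theorem**: `E_S = E₁ ∪ {S, SP1, SP2, EL1}` is sound and ground-complete modulo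
simulation equivalence over CCS. -/
theorem stmt_9 (A : Type) :
    SystemSound SEq (E1 A ∪ S A ∪ SP1 A ∪ SP2 A ∪ EL1 A) ∧
    GroundComplete SEq (E1 A ∪ S A ∪ SP1 A ∪ SP2 A ∪ EL1 A) := by
  constructor
  · intro e he σ _
    exact sound_all A e he σ
  · intro p q hp hq hpq
    obtain ⟨np, hsp, dp⟩ := nf p hp
    obtain ⟨nq, hsq, dq⟩ := nf q hq
    have e1 : SEq p np := by
      have := deriv_sound (sound_all A) dp (fun _ => Tm.nil)
      rwa [subst_closed _ p hp, subst_closed _ np (sumform_closed hsp)] at this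
    have e2 : SEq q nq := by
      have := deriv_sound (sound_all A) dq (fun _ => Tm.nil)
      rwa [subst_closed _ q hq, subst_closed _ nq (sumform_closed hsq)] at this
    have e3 : SEq np nq := seq_trans (seq_trans (seq_symm e1) hpq) e2
    have d1 := main_complete np hsp nq hsq e3.1
    have d2 := main_complete nq hsq np hsp e3.2
    have dnn : Deriv (ESy A) np nq := (d2.symm.trans (dcomm nq np)).trans d1
    exact dp.trans (dnn.trans dq.symm)
end

section
/- The axiom system E_T = E_1 ∪ {T, TP, EL1} is sound and ground-complete modulo trace equivalence ∼_T over CCS. -/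
/-- Multi-step transitions along a sequence of actions. -/
inductive MStep {A : Type} : Tm A → List (Act A) → Tm A → Prop
  | refl (p : Tm A) : MStep p [] p
  | step {p p' q : Tm A} {μ : Act A} {φ : List (Act A)} :
      Step p μ p' → MStep p' φ q → MStep p (μ :: φ) q

/-- `φ` is a trace of `p`. -/
def HasTrace {A : Type} (p : Tm A) (φ : List (Act A)) : Prop := ∃ p', MStep p φ p'

/-- Trace equivalence. -/
def TEq {A : Type} (p q : Tm A) : Prop := ∀ φ, HasTrace p φ ↔ HasTrace q φ

/-- The axiom schema T: `μ.x + μ.y ≈ μ.(x + y)`. -/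
def T (A : Type) : Set (Eqn A) :=
  { e | ∃ μ : Act A,
      e = (.plus (.pre μ (.var 0)) (.pre μ (.var 1)),
           .pre μ (.plus (.var 0) (.var 1))) }

/-- The axiom TP: `(x + y) ‖ z ≈ x ‖ z + y ‖ z`. -/
def TP (A : Type) : Set (Eqn A) :=
  { (.par (.plus (.var 0) (.var 1)) (.var 2),
     .plus (.par (.var 0) (.var 2)) (.par (.var 1) (.var 2))) }

namespace CCSaux
variable {A : Type}

@[simp] lemma co_co (α : Act A) : α.co.co = α := by cases α <;> rfl

lemma co_ne_tau {α : Act A} (h : α ≠ .tau) : α.co ≠ .tau := by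
  cases α <;> simp [Act.co] at * 

lemma hasTrace_nilE : ∀ {φ : List (Act A)}, HasTrace (.nil : Tm A) φ → φ = [] := by
  rintro φ ⟨p', h⟩
  cases h with
  | refl => rfl
  | step h _ => cases h

@[simp] lemma hasTrace_empty (p : Tm A) : HasTrace p [] := ⟨p, .refl p⟩

lemma hasTrace_nil_iff {φ : List (Act A)} : HasTrace (.nil : Tm A) φ ↔ φ = [] :=
  ⟨hasTrace_nilE, by rintro rfl; simp⟩

lemma hasTrace_pre {μ : Act A} {t : Tm A} {φ : List (Act A)} :
    HasTrace (.pre μ t) φ ↔ φ = [] ∨ ∃ ψ, φ = μ :: ψ ∧ HasTrace t ψ := by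
  constructor
  · rintro ⟨p', h⟩
    cases h with
    | refl => exact Or.inl rfl
    | step h hm => cases h; exact Or.inr ⟨_, rfl, _, hm⟩
  · rintro (rfl | ⟨ψ, rfl, q, hq⟩)
    · simp
    · exact ⟨q, .step (.pre μ t) hq⟩

lemma hasTrace_plus {t u : Tm A} {φ : List (Act A)} :
    HasTrace (.plus t u) φ ↔ HasTrace t φ ∨ HasTrace u φ := by
  constructor
  · rintro ⟨p', h⟩
    cases h with
    | refl => simp
    | step h hm =>
      cases h with
      | plusL h => exact Or.inl ⟨_, .step h hm⟩
      | plusR h => exact Or.inr ⟨_, .step h hm⟩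
  · rintro (⟨q, hq⟩ | ⟨q, hq⟩)
    · cases hq with
      | refl => simp
      | step h hm => exact ⟨_, .step (.plusL h) hm⟩
    · cases hq with
      | refl => simp
      | step h hm => exact ⟨_, .step (.plusR h) hm⟩

/-- Interleaving with synchronisation. -/
inductive Zip : List (Act A) → List (Act A) → List (Act A) → Prop
  | nil : Zip [] [] []
  | left {ψ χ φ} (μ : Act A) : Zip ψ χ φ → Zip (μ :: ψ) χ (μ :: φ)
  | right {ψ χ φ} (μ : Act A) : Zip ψ χ φ → Zip ψ (μ :: χ) (μ :: φ)
  | sync {ψ χ φ} {α : Act A} (h : α ≠ .tau) : Zip ψ χ φ →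
      Zip (α :: ψ) (α.co :: χ) (.tau :: φ)

lemma zip_nil_left : ∀ χ : List (Act A), Zip [] χ χ := by
  intro χ; induction χ with
  | nil => exact .nil
  | cons μ χ ih => exact .right μ ih

lemma zip_nil_right : ∀ ψ : List (Act A), Zip ψ [] ψ := by
  intro ψ; induction ψ with
  | nil => exact .nil
  | cons μ ψ ih => exact .left μ ih

lemma zip_comm {ψ χ φ : List (Act A)} (h : Zip ψ χ φ) : Zip χ ψ φ := by
  induction h with
  | nil => exact .nil
  | left μ _ ih => exact .right μ ih
  | right μ _ ih => exact .left μ ih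
  | sync hα _ ih =>
    have := Zip.sync (co_ne_tau hα) ih
    simpa using this

lemma hasTrace_par {t u : Tm A} {φ : List (Act A)} :
    HasTrace (.par t u) φ ↔ ∃ ψ χ, Zip ψ χ φ ∧ HasTrace t ψ ∧ HasTrace u χ := by
  constructor
  · rintro ⟨p', h⟩
    induction φ generalizing t u with
    | nil => exact ⟨[], [], .nil, by simp, by simp⟩
    | cons μ φ ih =>
      cases h with
      | step h hm =>
        cases h with
        | parL h1 =>
          obtain ⟨ψ, χ, hz, ⟨a, ha⟩, hb⟩ := ih hm
          exact ⟨μ :: ψ, χ, .left μ hz, ⟨a, .step h1 ha⟩, hb⟩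
        | parR h1 =>
          obtain ⟨ψ, χ, hz, ha, ⟨b, hb⟩⟩ := ih hm
          exact ⟨ψ, μ :: χ, .right μ hz, ha, ⟨b, .step h1 hb⟩⟩
        | comm hα h1 h2 =>
          obtain ⟨ψ, χ, hz, ⟨a, ha⟩, ⟨b, hb⟩⟩ := ih hm
          exact ⟨_ :: ψ, _ :: χ, .sync hα hz, ⟨a, .step h1 ha⟩, ⟨b, .step h2 hb⟩⟩
  · rintro ⟨ψ, χ, hz, ⟨a, ha⟩, ⟨b, hb⟩⟩
    induction hz generalizing t u with
    | nil => exact ⟨_, .refl _⟩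
    | left μ _ ih =>
      cases ha with
      | step h1 hm => obtain ⟨c, hc⟩ := ih hm hb; exact ⟨c, .step (.parL h1) hc⟩
    | right μ _ ih =>
      cases hb with
      | step h1 hm => obtain ⟨c, hc⟩ := ih ha hm; exact ⟨c, .step (.parR h1) hc⟩
    | sync hα _ ih =>
      cases ha with
      | step h1 hm1 =>
        cases hb with
        | step h2 hm2 =>
          obtain ⟨c, hc⟩ := ih hm1 hm2
          exact ⟨c, .step (.comm hα h1 h2) hc⟩

end CCSaux
namespace CCSaux
variable {A : Type}

lemma teq_refl (p : Tm A) : TEq p p := fun _ => Iff.rfl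
lemma teq_symm {p q : Tm A} (h : TEq p q) : TEq q p := fun φ => (h φ).symm
lemma teq_trans {p q r : Tm A} (h : TEq p q) (h' : TEq q r) : TEq p r :=
  fun φ => (h φ).trans (h' φ)

lemma teq_pre (μ : Act A) {p q : Tm A} (h : TEq p q) : TEq (.pre μ p) (.pre μ q) := by
  intro φ
  rw [hasTrace_pre, hasTrace_pre]
  constructor <;> rintro (rfl | ⟨ψ, rfl, hψ⟩)
  · exact Or.inl rfl
  · exact Or.inr ⟨ψ, rfl, (h ψ).1 hψ⟩
  · exact Or.inl rfl
  · exact Or.inr ⟨ψ, rfl, (h ψ).2 hψ⟩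

lemma teq_plus {p q p' q' : Tm A} (h : TEq p q) (h' : TEq p' q') :
    TEq (.plus p p') (.plus q q') := by
  intro φ; rw [hasTrace_plus, hasTrace_plus, h φ, h' φ]

lemma teq_par {p q p' q' : Tm A} (h : TEq p q) (h' : TEq p' q') :
    TEq (.par p p') (.par q q') := by
  intro φ
  rw [hasTrace_par, hasTrace_par]
  constructor <;> rintro ⟨ψ, χ, hz, ha, hb⟩
  · exact ⟨ψ, χ, hz, (h ψ).1 ha, (h' χ).1 hb⟩
  · exact ⟨ψ, χ, hz, (h ψ).2 ha, (h' χ).2 hb⟩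

-- Soundness of the individual axioms, as TEq of arbitrary instances.
lemma teq_plus_nil (p : Tm A) : TEq (.plus p .nil) p := by
  intro φ
  rw [hasTrace_plus]
  constructor
  · rintro (h | h)
    · exact h
    · rw [hasTrace_nilE h]; simp
  · exact Or.inl

lemma teq_plus_comm (p q : Tm A) : TEq (.plus p q) (.plus q p) := by
  intro φ; rw [hasTrace_plus, hasTrace_plus]; exact or_comm

lemma teq_plus_assoc (p q r : Tm A) :
    TEq (.plus (.plus p q) r) (.plus p (.plus q r)) := by
  intro φ; simp only [hasTrace_plus]; exact or_assoc

lemma teq_plus_idem (p : Tm A) : TEq (.plus p p) p := by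
  intro φ; rw [hasTrace_plus]; exact or_self_iff

lemma zip_nil_snd : ∀ {ψ χ φ : List (Act A)}, Zip ψ χ φ → χ = [] → φ = ψ := by
  intro ψ χ φ h
  induction h with
  | nil => intro; rfl
  | left μ _ ih => intro h'; rw [ih h']
  | right => simp
  | sync => simp

lemma teq_par_nil (p : Tm A) : TEq (.par p .nil) p := by
  intro φ
  rw [hasTrace_par]
  constructor
  · rintro ⟨ψ, χ, hz, ha, hb⟩
    rw [zip_nil_snd hz (hasTrace_nilE hb)]
    exact ha
  · intro h
    exact ⟨φ, [], zip_nil_right φ, h, by simp⟩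

lemma teq_par_comm (p q : Tm A) : TEq (.par p q) (.par q p) := by
  intro φ
  rw [hasTrace_par, hasTrace_par]
  constructor <;> rintro ⟨ψ, χ, hz, ha, hb⟩
  · exact ⟨χ, ψ, zip_comm hz, hb, ha⟩
  · exact ⟨χ, ψ, zip_comm hz, hb, ha⟩

lemma teq_TP (p q r : Tm A) :
    TEq (.par (.plus p q) r) (.plus (.par p r) (.par q r)) := by
  intro φ
  rw [hasTrace_par, hasTrace_plus, hasTrace_par, hasTrace_par]
  constructor
  · rintro ⟨ψ, χ, hz, ha, hb⟩
    rcases hasTrace_plus.1 ha with h | h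
    · exact Or.inl ⟨ψ, χ, hz, h, hb⟩
    · exact Or.inr ⟨ψ, χ, hz, h, hb⟩
  · rintro (⟨ψ, χ, hz, ha, hb⟩ | ⟨ψ, χ, hz, ha, hb⟩)
    · exact ⟨ψ, χ, hz, hasTrace_plus.2 (Or.inl ha), hb⟩
    · exact ⟨ψ, χ, hz, hasTrace_plus.2 (Or.inr ha), hb⟩

lemma teq_T (μ : Act A) (p q : Tm A) :
    TEq (.plus (.pre μ p) (.pre μ q)) (.pre μ (.plus p q)) := by
  intro φ
  rw [hasTrace_plus, hasTrace_pre, hasTrace_pre, hasTrace_pre]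
  constructor
  · rintro ((rfl | ⟨ψ, rfl, h⟩) | (rfl | ⟨ψ, rfl, h⟩))
    · exact Or.inl rfl
    · exact Or.inr ⟨ψ, rfl, hasTrace_plus.2 (Or.inl h)⟩
    · exact Or.inl rfl
    · exact Or.inr ⟨ψ, rfl, hasTrace_plus.2 (Or.inr h)⟩
  · rintro (rfl | ⟨ψ, rfl, h⟩)
    · exact Or.inl (Or.inl rfl)
    · rcases hasTrace_plus.1 h with h | h
      · exact Or.inl (Or.inr ⟨ψ, rfl, h⟩)
      · exact Or.inr (Or.inr ⟨ψ, rfl, h⟩)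

end CCSaux
namespace CCSaux
variable {A : Type}

lemma hasTrace_parpre {μ ν : Act A} {p q : Tm A} {φ : List (Act A)} :
    HasTrace (.par (.pre μ p) (.pre ν q)) φ ↔
      φ = [] ∨ (∃ ψ, φ = μ :: ψ ∧ HasTrace (.par p (.pre ν q)) ψ)
             ∨ (∃ ψ, φ = ν :: ψ ∧ HasTrace (.par (.pre μ p) q) ψ)
             ∨ ((μ ≠ Act.tau ∧ μ = Act.co ν) ∧
                 ∃ ψ, φ = .tau :: ψ ∧ HasTrace (.par p q) ψ) := by
  constructor
  · rintro ⟨s, h⟩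
    cases h with
    | refl => exact Or.inl rfl
    | step h hm =>
      cases h with
      | parL h1 => cases h1; exact Or.inr (Or.inl ⟨_, rfl, _, hm⟩)
      | parR h1 => cases h1; exact Or.inr (Or.inr (Or.inl ⟨_, rfl, _, hm⟩))
      | comm hα h1 h2 =>
        cases h1
        cases h2
        refine Or.inr (Or.inr (Or.inr ⟨⟨hα, ?_⟩, _, rfl, _, hm⟩))
        exact (co_co μ).symm
  · rintro (rfl | ⟨ψ, rfl, s, hs⟩ | ⟨ψ, rfl, s, hs⟩ | ⟨⟨hμ, hco⟩, ψ, rfl, s, hs⟩)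
    · simp
    · exact ⟨s, .step (.parL (.pre μ p)) hs⟩
    · exact ⟨s, .step (.parR (.pre ν q)) hs⟩
    · refine ⟨s, .step (.comm hμ (.pre μ p) ?_) hs⟩
      have hco' : μ.co = ν := by rw [hco, co_co]
      rw [hco']
      exact .pre ν q

lemma teq_EL1a {μ ν : Act A} (h : ¬(μ ≠ Act.tau ∧ μ = Act.co ν)) (p q : Tm A) :
    TEq (.par (.pre μ p) (.pre ν q))
        (.plus (.pre μ (.par p (.pre ν q))) (.pre ν (.par (.pre μ p) q))) := by
  intro φ
  rw [hasTrace_parpre, hasTrace_plus, hasTrace_pre, hasTrace_pre]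
  constructor
  · rintro (rfl | h1 | h1 | ⟨hc, _⟩)
    · exact Or.inl (Or.inl rfl)
    · exact Or.inl (Or.inr h1)
    · exact Or.inr (Or.inr h1)
    · exact absurd hc h
  · rintro ((rfl | h1) | (rfl | h1))
    · exact Or.inl rfl
    · exact Or.inr (Or.inl h1)
    · exact Or.inl rfl
    · exact Or.inr (Or.inr (Or.inl h1))

lemma teq_EL1b {μ ν : Act A} (h : μ ≠ Act.tau ∧ μ = Act.co ν) (p q : Tm A) :
    TEq (.par (.pre μ p) (.pre ν q))
        (.plus (.plus (.pre μ (.par p (.pre ν q))) (.pre ν (.par (.pre μ p) q)))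
               (.pre .tau (.par p q))) := by
  intro φ
  rw [hasTrace_parpre, hasTrace_plus, hasTrace_plus, hasTrace_pre, hasTrace_pre,
    hasTrace_pre]
  constructor
  · rintro (rfl | h1 | h1 | ⟨_, h1⟩)
    · exact Or.inl (Or.inl (Or.inl rfl))
    · exact Or.inl (Or.inl (Or.inr h1))
    · exact Or.inl (Or.inr (Or.inr h1))
    · exact Or.inr (Or.inr h1)
  · rintro (((rfl | h1) | (rfl | h1)) | (rfl | h1))
    · exact Or.inl rfl
    · exact Or.inr (Or.inl h1)
    · exact Or.inl rfl
    · exact Or.inr (Or.inr (Or.inl h1))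
    · exact Or.inl rfl
    · exact Or.inr (Or.inr (Or.inr ⟨h, h1⟩))

/-- Soundness of the whole axiom system. -/
lemma system_sound : SystemSound TEq (E1 A ∪ T A ∪ TP A ∪ EL1 A) := by
  rintro ⟨t, u⟩ hmem σ hσ
  simp only [E1, E0, T, TP, EL1, Set.union_assoc, Set.mem_union, Set.mem_insert_iff,
    Set.mem_singleton_iff, Set.mem_setOf_eq, Prod.mk.injEq] at hmem
  rcases hmem with ((⟨h1, h2⟩ | ⟨h1, h2⟩ | ⟨h1, h2⟩ | ⟨h1, h2⟩) |
    (⟨h1, h2⟩ | ⟨h1, h2⟩) | ⟨μ, h1, h2⟩ | ⟨h1, h2⟩ |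
    ⟨μ, ν, (⟨hc, h1, h2⟩ | ⟨hc, h1, h2⟩)⟩) <;> subst h1 <;> subst h2 <;>
    simp only [subst]
  · exact teq_plus_nil _
  · exact teq_plus_comm _ _
  · exact teq_plus_assoc _ _ _
  · exact teq_plus_idem _
  · exact teq_par_nil _
  · exact teq_par_comm _ _
  · exact teq_T _ _ _
  · exact teq_TP _ _ _
  · exact teq_EL1a hc _ _
  · exact teq_EL1b hc _ _

lemma subst_subst (σ σ' : ℕ → Tm A) (t : Tm A) :
    subst σ (subst σ' t) = subst (fun x => subst σ (σ' x)) t := by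
  induction t with
  | nil => rfl
  | var x => rfl
  | pre μ t ih => simp [subst, ih]
  | plus t u iht ihu => simp [subst, iht, ihu]
  | par t u iht ihu => simp [subst, iht, ihu]

lemma closed_subst {σ : ℕ → Tm A} (hσ : ClosedSubst σ) (t : Tm A) :
    Closed (subst σ t) := by
  induction t with
  | nil => trivial
  | var x => exact hσ x
  | pre μ t ih => exact ih
  | plus t u iht ihu => exact ⟨iht, ihu⟩
  | par t u iht ihu => exact ⟨iht, ihu⟩

lemma subst_of_closed {σ : ℕ → Tm A} {t : Tm A} (h : Closed t) : subst σ t = t := by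
  induction t with
  | nil => rfl
  | var x => cases h
  | pre μ t ih => simp [subst, ih h]
  | plus t u iht ihu => simp [subst, iht h.1, ihu h.2]
  | par t u iht ihu => simp [subst, iht h.1, ihu h.2]

lemma deriv_sound {E : Set (Eqn A)} (hS : SystemSound TEq E) {t u : Tm A}
    (h : Deriv E t u) : ∀ σ : ℕ → Tm A, ClosedSubst σ → TEq (subst σ t) (subst σ u) := by
  induction h with
  | ax σ' hmem =>
    intro σ hσ
    rw [subst_subst, subst_subst]
    exact hS _ hmem _ (fun x => closed_subst hσ (σ' x))
  | refl t => intro σ hσ; exact teq_refl _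
  | symm _ ih => intro σ hσ; exact teq_symm (ih σ hσ)
  | trans _ _ ih1 ih2 => intro σ hσ; exact teq_trans (ih1 σ hσ) (ih2 σ hσ)
  | pre μ _ ih => intro σ hσ; exact teq_pre μ (ih σ hσ)
  | plus _ _ ih1 ih2 => intro σ hσ; exact teq_plus (ih1 σ hσ) (ih2 σ hσ)
  | par _ _ ih1 ih2 => intro σ hσ; exact teq_par (ih1 σ hσ) (ih2 σ hσ)

lemma deriv_sound_closed {E : Set (Eqn A)} (hS : SystemSound TEq E) {t u : Tm A}
    (h : Deriv E t u) (ht : Closed t) (hu : Closed u) : TEq t u := by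
  have := deriv_sound hS h (fun _ => .nil) (fun _ => trivial)
  rwa [subst_of_closed ht, subst_of_closed hu] at this

end CCSaux
namespace CCSaux
variable {A : Type}

/-- The axiom system E_T. -/
def ES (A : Type) : Set (Eqn A) := E1 A ∪ T A ∪ TP A ∪ EL1 A

abbrev D (t u : Tm A) : Prop := Deriv (ES A) t u

lemma dA0 (t : Tm A) : D (.plus t .nil) t := by
  have hmem : ((.plus (.var 0) .nil, .var 0) : Eqn A) ∈ ES A := by
    simp [ES, E1, E0]
  exact Deriv.ax (fun _ => t) hmem

lemma dComm (t u : Tm A) : D (.plus t u) (.plus u t) := by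
  have hmem : ((.plus (.var 0) (.var 1), .plus (.var 1) (.var 0)) : Eqn A) ∈ ES A := by
    simp [ES, E1, E0]
  exact Deriv.ax (fun n => if n = 0 then t else u) hmem

lemma dAssoc (t u v : Tm A) :
    D (.plus (.plus t u) v) (.plus t (.plus u v)) := by
  have hmem : ((.plus (.plus (.var 0) (.var 1)) (.var 2),
      .plus (.var 0) (.plus (.var 1) (.var 2))) : Eqn A) ∈ ES A := by
    simp [ES, E1, E0]
  exact Deriv.ax (fun n => if n = 0 then t else if n = 1 then u else v) hmem

lemma dIdem (t : Tm A) : D (.plus t t) t := by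
  have hmem : ((.plus (.var 0) (.var 0), .var 0) : Eqn A) ∈ ES A := by
    simp [ES, E1, E0]
  exact Deriv.ax (fun _ => t) hmem

lemma dP0 (t : Tm A) : D (.par t .nil) t := by
  have hmem : ((.par (.var 0) .nil, .var 0) : Eqn A) ∈ ES A := by
    simp [ES, E1, E0]
  exact Deriv.ax (fun _ => t) hmem

lemma dP1 (t u : Tm A) : D (.par t u) (.par u t) := by
  have hmem : ((.par (.var 0) (.var 1), .par (.var 1) (.var 0)) : Eqn A) ∈ ES A := by
    simp [ES, E1, E0]
  exact Deriv.ax (fun n => if n = 0 then t else u) hmem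

lemma dT (μ : Act A) (t u : Tm A) :
    D (.plus (.pre μ t) (.pre μ u)) (.pre μ (.plus t u)) := by
  have hmem : ((.plus (.pre μ (.var 0)) (.pre μ (.var 1)),
      .pre μ (.plus (.var 0) (.var 1))) : Eqn A) ∈ ES A := by
    simp only [ES, Set.mem_union]
    exact Or.inl (Or.inl (Or.inr ⟨μ, rfl⟩))
  exact Deriv.ax (fun n => if n = 0 then t else u) hmem

lemma dTP (t u v : Tm A) :
    D (.par (.plus t u) v) (.plus (.par t v) (.par u v)) := by
  have hmem : ((.par (.plus (.var 0) (.var 1)) (.var 2),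
      .plus (.par (.var 0) (.var 2)) (.par (.var 1) (.var 2))) : Eqn A) ∈ ES A := by
    simp [ES, TP]
  exact Deriv.ax (fun n => if n = 0 then t else if n = 1 then u else v) hmem

lemma dEL1a {μ ν : Act A} (h : ¬(μ ≠ Act.tau ∧ μ = Act.co ν)) (t u : Tm A) :
    D (.par (.pre μ t) (.pre ν u))
      (.plus (.pre μ (.par t (.pre ν u))) (.pre ν (.par (.pre μ t) u))) := by
  have hmem : ((.par (.pre μ (.var 0)) (.pre ν (.var 1)),
      .plus (.pre μ (.par (.var 0) (.pre ν (.var 1))))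
            (.pre ν (.par (.pre μ (.var 0)) (.var 1)))) : Eqn A) ∈ ES A := by
    simp only [ES, Set.mem_union]
    exact Or.inr ⟨μ, ν, Or.inl ⟨h, rfl⟩⟩
  exact Deriv.ax (fun n => if n = 0 then t else u) hmem

lemma dEL1b {μ ν : Act A} (h : μ ≠ Act.tau ∧ μ = Act.co ν) (t u : Tm A) :
    D (.par (.pre μ t) (.pre ν u))
      (.plus (.plus (.pre μ (.par t (.pre ν u))) (.pre ν (.par (.pre μ t) u)))
             (.pre .tau (.par t u))) := by
  have hmem : ((.par (.pre μ (.var 0)) (.pre ν (.var 1)),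
      .plus (.plus (.pre μ (.par (.var 0) (.pre ν (.var 1))))
                   (.pre ν (.par (.pre μ (.var 0)) (.var 1))))
            (.pre .tau (.par (.var 0) (.var 1)))) : Eqn A) ∈ ES A := by
    simp only [ES, Set.mem_union]
    exact Or.inr ⟨μ, ν, Or.inr ⟨h, rfl⟩⟩
  exact Deriv.ax (fun n => if n = 0 then t else u) hmem

-- derived rearrangements
lemma dNilPlus (t : Tm A) : D (.plus .nil t) t := (dComm _ _).trans (dA0 t)

lemma dRot (a b c : Tm A) : D (.plus (.plus a b) c) (.plus (.plus a c) b) :=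
  ((dAssoc a b c).trans ((Deriv.refl a).plus (dComm b c))).trans
    (Deriv.symm (dAssoc a c b))

lemma dMedial (a b c d : Tm A) :
    D (.plus (.plus a b) (.plus c d)) (.plus (.plus a c) (.plus b d)) := by
  refine (dAssoc a b (.plus c d)).trans (Deriv.trans ?_ (Deriv.symm
    (dAssoc a c (.plus b d))))
  refine Deriv.plus (.refl a) ?_
  refine (Deriv.symm (dAssoc b c d)).trans (Deriv.trans ?_ (dAssoc c b d))
  exact Deriv.plus (dComm b c) (.refl d)

/-- Synchronisation trees. -/
inductive Tree : Tm A → Prop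
  | nil : Tree .nil
  | pre (μ : Act A) {t : Tm A} : Tree t → Tree (.pre μ t)
  | plus {t u : Tm A} : Tree t → Tree u → Tree (.plus t u)

/-- Expansion: the parallel composition of two trees can be rewritten to a tree. -/
lemma expansion : ∀ {p : Tm A}, Tree p → ∀ {q : Tm A}, Tree q →
    ∃ r, Tree r ∧ D (.par p q) r := by
  intro p hp
  induction hp with
  | nil =>
    intro q hq
    exact ⟨q, hq, (dP1 .nil q).trans (dP0 q)⟩
  | @plus p1 p2 _ _ ih1 ih2 =>
    intro q hq
    obtain ⟨r1, hr1, hd1⟩ := ih1 hq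
    obtain ⟨r2, hr2, hd2⟩ := ih2 hq
    exact ⟨.plus r1 r2, hr1.plus hr2, (dTP p1 p2 q).trans (hd1.plus hd2)⟩
  | @pre μ p0 hp0 ih =>
    intro q hq
    induction hq with
    | nil => exact ⟨.pre μ p0, hp0.pre μ, dP0 _⟩
    | @plus q1 q2 hq1 hq2 ihq1 ihq2 =>
      obtain ⟨r1, hr1, hd1⟩ := ihq1
      obtain ⟨r2, hr2, hd2⟩ := ihq2
      refine ⟨.plus r1 r2, hr1.plus hr2, ?_⟩
      refine (dP1 _ _).trans ((dTP q1 q2 (.pre μ p0)).trans ?_)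
      exact Deriv.plus ((dP1 q1 _).trans hd1) ((dP1 q2 _).trans hd2)
    | @pre ν q0 hq0 ihq0 =>
      obtain ⟨r1, hr1, hd1⟩ := ih (hq0.pre ν)      -- p0 ‖ ν.q0
      obtain ⟨r2, hr2, hd2⟩ := ihq0                 -- μ.p0 ‖ q0
      by_cases hc : μ ≠ Act.tau ∧ μ = Act.co ν
      · obtain ⟨r3, hr3, hd3⟩ := ih hq0             -- p0 ‖ q0
        refine ⟨.plus (.plus (.pre μ r1) (.pre ν r2)) (.pre .tau r3),
          ((hr1.pre μ).plus (hr2.pre ν)).plus (hr3.pre .tau), ?_⟩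
        refine (dEL1b hc p0 q0).trans ?_
        exact Deriv.plus (Deriv.plus (hd1.pre μ) (hd2.pre ν)) (hd3.pre .tau)
      · refine ⟨.plus (.pre μ r1) (.pre ν r2), (hr1.pre μ).plus (hr2.pre ν), ?_⟩
        exact (dEL1a hc p0 q0).trans (Deriv.plus (hd1.pre μ) (hd2.pre ν))

/-- Every closed term is derivably equal to a tree. -/
lemma normalize : ∀ {p : Tm A}, Closed p → ∃ r, Tree r ∧ D p r := by
  intro p hp
  induction p with
  | nil => exact ⟨.nil, .nil, .refl _⟩
  | var x => cases hp
  | pre μ t ih =>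
    obtain ⟨r, hr, hd⟩ := ih hp
    exact ⟨.pre μ r, hr.pre μ, hd.pre μ⟩
  | plus t u iht ihu =>
    obtain ⟨r, hr, hdr⟩ := iht hp.1
    obtain ⟨s, hs, hds⟩ := ihu hp.2
    exact ⟨.plus r s, hr.plus hs, hdr.plus hds⟩
  | par t u iht ihu =>
    obtain ⟨r, hr, hdr⟩ := iht hp.1
    obtain ⟨s, hs, hds⟩ := ihu hp.2
    obtain ⟨w, hw, hdw⟩ := expansion hr hs
    exact ⟨w, hw, (hdr.par hds).trans hdw⟩

lemma tree_closed : ∀ {p : Tm A}, Tree p → Closed p := by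
  intro p hp
  induction hp with
  | nil => trivial
  | pre μ _ ih => exact ih
  | plus _ _ ih1 ih2 => exact ⟨ih1, ih2⟩

end CCSaux
namespace CCSaux
variable {A : Type}

open Classical in
/-- The sum of the `μ`-derivatives of a tree. -/
noncomputable def dsum (μ : Act A) : Tm A → Tm A
  | .nil => .nil
  | .var _ => .nil
  | .pre ν t => if ν = μ then t else .nil
  | .plus t u => .plus (dsum μ t) (dsum μ u)
  | .par _ _ => .nil

open Classical in
/-- The tree with the `μ`-summands removed. -/
noncomputable def rem (μ : Act A) : Tm A → Tm A
  | .nil => .nil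
  | .var _ => .nil
  | .pre ν t => if ν = μ then .nil else .pre ν t
  | .plus t u => .plus (rem μ t) (rem μ u)
  | .par _ _ => .nil

/-- A tree has a `μ`-summand. -/
def HasSum (μ : Act A) : Tm A → Prop
  | .pre ν _ => ν = μ
  | .plus t u => HasSum μ t ∨ HasSum μ u
  | _ => False

def size : Tm A → ℕ
  | .nil => 1
  | .var _ => 1
  | .pre _ t => size t + 1
  | .plus t u => size t + size u + 1
  | .par t u => size t + size u + 1

lemma size_pos (t : Tm A) : 1 ≤ size t := by cases t <;> simp [size]

lemma tree_dsum (μ : Act A) : ∀ {s : Tm A}, Tree s → Tree (dsum μ s) := by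
  intro s hs
  induction hs with
  | nil => exact .nil
  | @pre ν t ht _ =>
    simp only [dsum]
    split
    · exact ht
    · exact .nil
  | plus _ _ ih1 ih2 => exact ih1.plus ih2

lemma tree_rem (μ : Act A) : ∀ {s : Tm A}, Tree s → Tree (rem μ s) := by
  intro s hs
  induction hs with
  | nil => exact .nil
  | @pre ν t ht _ =>
    simp only [rem]
    split
    · exact .nil
    · exact ht.pre ν
  | plus _ _ ih1 ih2 => exact ih1.plus ih2

lemma size_dsum_le (μ : Act A) : ∀ s : Tm A, size (dsum μ s) ≤ size s := by
  intro s
  induction s with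
  | nil => simp [dsum]
  | var x => simp [dsum, size]
  | pre ν t _ =>
    simp only [dsum]
    split
    · simp [size]
    · simp [size]
  | plus t u ih1 ih2 => simp only [dsum, size]; omega
  | par t u _ _ => simp [dsum, size]

/-- If `s` has no `μ`-summand then `dsum μ s` is provably `0` and `rem μ s` provably `s`. -/
lemma noSum_d {μ : Act A} : ∀ {s : Tm A}, Tree s → ¬HasSum μ s →
    D (dsum μ s) (.nil : Tm A) ∧ D (rem μ s) s := by
  intro s hs
  induction hs with
  | nil => intro _; exact ⟨.refl _, .refl _⟩
  | @pre ν t _ _ =>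
    intro h
    have hν : ¬ ν = μ := h
    simp only [dsum, rem, if_neg hν]
    exact ⟨.refl _, .refl _⟩
  | @plus t u _ _ ih1 ih2 =>
    intro h
    simp only [HasSum, not_or] at h
    obtain ⟨h1, h2⟩ := ih1 h.1
    obtain ⟨h3, h4⟩ := ih2 h.2
    exact ⟨(h1.plus h3).trans (dA0 _), h2.plus h4⟩

/-- Merging all `μ`-summands of a tree using T. -/
lemma merge {μ : Act A} : ∀ {s : Tm A}, Tree s → HasSum μ s →
    D s (.plus (.pre μ (dsum μ s)) (rem μ s)) := by
  intro s hs
  induction hs with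
  | nil => intro h; cases h
  | @pre ν t _ _ =>
    intro h
    have hν : ν = μ := h
    subst hν
    simp only [dsum, rem, if_pos rfl]
    exact Deriv.symm (dA0 _)
  | @plus t u ht hu ih1 ih2 =>
    intro h
    simp only [dsum, rem]
    by_cases h1 : HasSum μ t <;> by_cases h2 : HasSum μ u
    · refine ((ih1 h1).plus (ih2 h2)).trans ?_
      refine (dMedial _ _ _ _).trans ?_
      exact Deriv.plus (dT μ _ _) (.refl _)
    · obtain ⟨hd, hr⟩ := noSum_d hu h2
      refine (((ih1 h1).plus hr.symm).trans (dAssoc _ _ _)).trans ?_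
      refine Deriv.plus (Deriv.pre μ ?_) (.refl _)
      exact Deriv.symm (((Deriv.refl _).plus hd).trans (dA0 _))
    · obtain ⟨hd, hr⟩ := noSum_d ht h1
      refine (hr.symm.plus (ih2 h2)).trans ?_
      refine Deriv.trans (Deriv.symm (dAssoc _ _ _)) ?_
      refine Deriv.trans (Deriv.plus (dComm _ _) (.refl _)) ?_
      refine (dAssoc _ _ _).trans ?_
      refine Deriv.plus (Deriv.pre μ ?_) (.refl _)
      exact Deriv.symm ((hd.plus (.refl _)).trans (dNilPlus _))
    · rcases h with h | h
      · exact absurd h h1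
      · exact absurd h h2

lemma hasSum_tr {μ : Act A} : ∀ {s : Tm A}, Tree s → HasSum μ s → HasTrace s [μ] := by
  intro s hs
  induction hs with
  | nil => intro h; cases h
  | @pre ν t _ _ =>
    intro h
    have hν : ν = μ := h
    subst hν
    exact ⟨t, .step (.pre ν t) (.refl t)⟩
  | plus _ _ ih1 ih2 =>
    rintro (h | h)
    · exact hasTrace_plus.2 (Or.inl (ih1 h))
    · exact hasTrace_plus.2 (Or.inr (ih2 h))

lemma tr_noSum {μ : Act A} {ψ : List (Act A)} :
    ∀ {s : Tm A}, Tree s → ¬HasSum μ s → HasTrace (dsum μ s) ψ → ψ = [] := by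
  intro s hs
  induction hs with
  | nil => intro _ h; exact hasTrace_nilE h
  | @pre ν t _ _ =>
    intro h1 h2
    have hν : ¬ ν = μ := h1
    rw [dsum, if_neg hν] at h2
    exact hasTrace_nilE h2
  | plus _ _ ih1 ih2 =>
    intro h1 h2
    simp only [HasSum, not_or] at h1
    rw [dsum] at h2
    rcases hasTrace_plus.1 h2 with h | h
    · exact ih1 h1.1 h
    · exact ih2 h1.2 h

lemma tr_dsum_fwd {μ : Act A} {ψ : List (Act A)} :
    ∀ {s : Tm A}, Tree s → HasTrace s (μ :: ψ) →
      HasSum μ s ∧ HasTrace (dsum μ s) ψ := by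
  intro s hs
  induction hs with
  | nil => intro h; cases hasTrace_nilE h
  | @pre ν t _ _ =>
    intro h
    rcases hasTrace_pre.1 h with h | ⟨ψ', heq, h⟩
    · cases h
    · obtain ⟨h1, h2⟩ := List.cons.injEq .. ▸ heq
      subst h1; subst h2
      refine ⟨rfl, ?_⟩
      rw [dsum, if_pos rfl]
      exact h
  | plus _ _ ih1 ih2 =>
    intro h
    rw [dsum]
    rcases hasTrace_plus.1 h with h | h
    · obtain ⟨h1, h2⟩ := ih1 h
      exact ⟨Or.inl h1, hasTrace_plus.2 (Or.inl h2)⟩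
    · obtain ⟨h1, h2⟩ := ih2 h
      exact ⟨Or.inr h1, hasTrace_plus.2 (Or.inr h2)⟩

lemma tr_dsum_bwd {μ : Act A} {ψ : List (Act A)} :
    ∀ {s : Tm A}, Tree s → HasSum μ s → HasTrace (dsum μ s) ψ →
      HasTrace s (μ :: ψ) := by
  intro s hs
  induction hs with
  | nil => intro h; cases h
  | @pre ν t _ _ =>
    intro h1 h2
    have hν : ν = μ := h1
    subst hν
    rw [dsum, if_pos rfl] at h2
    exact hasTrace_pre.2 (Or.inr ⟨ψ, rfl, h2⟩)
  | @plus t u ht hu ih1 ih2 =>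
    intro h1 h2
    rw [dsum] at h2
    rcases hasTrace_plus.1 h2 with h | h
    · by_cases hst : HasSum μ t
      · exact hasTrace_plus.2 (Or.inl (ih1 hst h))
      · rw [tr_noSum ht hst h]
        exact hasSum_tr (ht.plus hu) h1
    · by_cases hsu : HasSum μ u
      · exact hasTrace_plus.2 (Or.inr (ih2 hsu h))
      · rw [tr_noSum hu hsu h]
        exact hasSum_tr (ht.plus hu) h1

/-- Absorption: if the traces of tree `r` are included in those of tree `s`,
then `s + r ≈ s` is derivable. -/
lemma absorb : ∀ n : ℕ, ∀ r s : Tm A, size r + size s ≤ n → Tree r → Tree s →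
    (∀ φ, HasTrace r φ → HasTrace s φ) → D (.plus s r) s := by
  intro n
  induction n with
  | zero =>
    intro r s hn
    have := size_pos r; have := size_pos s
    omega
  | succ n ih =>
    intro r s hn hr hs hsub
    cases hr with
    | nil => exact dA0 s
    | @pre μ r0 hr0 =>
      -- s has a μ-summand
      have htr : HasTrace s [μ] :=
        hsub [μ] (hasTrace_pre.2 (Or.inr ⟨[], rfl, hasTrace_empty r0⟩))
      have hSum : HasSum μ s := (tr_dsum_fwd hs htr).1
      have hsub0 : ∀ ψ, HasTrace r0 ψ → HasTrace (dsum μ s) ψ := by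
        intro ψ hψ
        exact (tr_dsum_fwd hs (hsub (μ :: ψ) (hasTrace_pre.2 (Or.inr ⟨ψ, rfl, hψ⟩)))).2
      have hIH : D (.plus (dsum μ s) r0) (dsum μ s) := by
        refine ih r0 (dsum μ s) ?_ hr0 (tree_dsum μ hs) hsub0
        have h1 := size_dsum_le μ s
        simp only [size] at hn
        omega
      have hm := merge hs hSum
      refine (Deriv.plus hm (.refl _)).trans (Deriv.trans ?_ hm.symm)
      refine (dRot _ _ _).trans ?_
      refine Deriv.plus ?_ (.refl _)
      refine (dT μ _ _).trans ?_
      exact Deriv.pre μ hIH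
    | @plus r1 r2 hr1 hr2 =>
      have h1 : D (.plus s r1) s := by
        refine ih r1 s ?_ hr1 hs ?_
        · simp only [size] at hn ⊢
          have := size_pos r2
          omega
        · intro φ hφ; exact hsub φ (hasTrace_plus.2 (Or.inl hφ))
      have h2 : D (.plus s r2) s := by
        refine ih r2 s ?_ hr2 hs ?_
        · simp only [size] at hn ⊢
          have := size_pos r1
          omega
        · intro φ hφ; exact hsub φ (hasTrace_plus.2 (Or.inr hφ))
      refine Deriv.trans (Deriv.symm (dAssoc s r1 r2)) ?_
      exact (Deriv.plus h1 (.refl r2)).trans h2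

/-- Completeness on trees. -/
lemma tree_complete {r s : Tm A} (hr : Tree r) (hs : Tree s) (h : TEq r s) :
    D r s := by
  have h1 : D (.plus s r) s :=
    absorb (size r + size s) r s le_rfl hr hs (fun φ => (h φ).1)
  have h2 : D (.plus r s) r :=
    absorb (size s + size r) s r le_rfl hs hr (fun φ => (h φ).2)
  exact h2.symm.trans ((dComm r s).trans h1)

end CCSaux
/-- **Theorem**: `E_T = E₁ ∪ {T, TP, EL1}` is sound and ground-complete modulo trace
equivalence over CCS. -/
theorem stmt_10 (A : Type) :
    SystemSound TEq (E1 A ∪ T A ∪ TP A ∪ EL1 A) ∧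
    GroundComplete TEq (E1 A ∪ T A ∪ TP A ∪ EL1 A) := by
  have hsound : SystemSound TEq (CCSaux.ES A) := CCSaux.system_sound
  refine ⟨hsound, ?_⟩
  intro p q hp hq hpq
  obtain ⟨r, hr, hdr⟩ := CCSaux.normalize hp
  obtain ⟨s, hs, hds⟩ := CCSaux.normalize hq
  have hpr : TEq p r :=
    CCSaux.deriv_sound_closed hsound hdr hp (CCSaux.tree_closed hr)
  have hqs : TEq q s :=
    CCSaux.deriv_sound_closed hsound hds hq (CCSaux.tree_closed hs)
  have hrs : TEq r s :=
    CCSaux.teq_trans (CCSaux.teq_symm hpr) (CCSaux.teq_trans hpq hqs)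
  have hd : CCSaux.D r s := CCSaux.tree_complete hr hs hrs
  exact hdr.trans (hd.trans hds.symm)
end

section
/- If the equation t ≈ u between CCS terms is sound modulo rooted weak bisimilarity ∼_RWB and t is action-free, then u is action-free as well. -/
/-- `p ⇒ q`: the reflexive-transitive closure of `→τ`. -/
def TauStar {A : Type} : Tm A → Tm A → Prop :=
  Relation.ReflTransGen (fun p q => Step p Act.tau q)

/-- `p ⇒^μ̂ q`: `p ⇒ p₁ →μ p₂ ⇒ q` for some `p₁`, `p₂` (for every `μ`, including τ). -/
def WeakHat {A : Type} (μ : Act A) (p q : Tm A) : Prop :=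
  ∃ p₁ p₂, TauStar p p₁ ∧ Step p₁ μ p₂ ∧ TauStar p₂ q

/-- `p ⇒^μ q`: `p ⇒ p₁ →μ p₂ ⇒ q` if `μ ≠ τ`, and `p ⇒ q` if `μ = τ`. -/
def WeakMu {A : Type} (μ : Act A) (p q : Tm A) : Prop :=
  (μ = Act.tau ∧ TauStar p q) ∨ (μ ≠ Act.tau ∧ WeakHat μ p q)

/-- `R` is a weak bisimulation. -/
def IsWB {A : Type} (R : Tm A → Tm A → Prop) : Prop :=
  (∀ p q, R p q → R q p) ∧
  (∀ p q μ p', R p q → Step p μ p' →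
    (μ = Act.tau ∧ R p' q) ∨ ∃ q', WeakMu μ q q' ∧ R p' q')

/-- Weak bisimilarity: the largest weak bisimulation. -/
def WB {A : Type} (p q : Tm A) : Prop := ∃ R, IsWB R ∧ R p q

/-- Rooted weak bisimilarity: initial moves must be matched by `⇒^μ̂`-moves leading to
weakly bisimilar processes, in both directions. -/
def RWB {A : Type} (p q : Tm A) : Prop :=
  (∀ μ p', Step p μ p' → ∃ q', WeakHat μ q q' ∧ WB p' q') ∧
  (∀ μ q', Step q μ q' → ∃ p', WeakHat μ p p' ∧ WB q' p')

/-- A term is action-free if it affords no transition. -/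
def ActionFree {A : Type} (t : Tm A) : Prop := ∀ μ t', ¬ Step t μ t'

/-- Steps lift along substitutions. -/
lemma step_subst {A : Type} (σ : ℕ → Tm A) {t t' : Tm A} {μ : Act A}
    (h : Step t μ t') : Step (subst σ t) μ (subst σ t') := by
  induction h with
  | pre μ t => exact Step.pre μ (subst σ t)
  | plusL _ ih => exact Step.plusL ih
  | plusR _ ih => exact Step.plusR ih
  | parL _ ih => exact Step.parL ih
  | parR _ ih => exact Step.parR ih
  | comm hne _ _ ih₁ ih₂ => exact Step.comm hne ih₁ ih₂

/-- A step of the nil-instance of `t` reflects to a step of `t`. -/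
lemma step_nilsubst {A : Type} {t : Tm A} {μ : Act A} {p : Tm A}
    (h : Step (subst (fun _ => Tm.nil) t) μ p) : ∃ t', Step t μ t' := by
  induction t generalizing μ p with
  | nil => cases h
  | var x => cases h
  | pre ν s => cases h; exact ⟨s, Step.pre ν s⟩
  | plus a b iha ihb =>
    cases h with
    | plusL h => obtain ⟨t', ht⟩ := iha h; exact ⟨t', Step.plusL ht⟩
    | plusR h => obtain ⟨t', ht⟩ := ihb h; exact ⟨t', Step.plusR ht⟩
  | par a b iha ihb =>
    cases h with
    | parL h => obtain ⟨t', ht⟩ := iha h; exact ⟨_, Step.parL ht⟩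
    | parR h => obtain ⟨t', ht⟩ := ihb h; exact ⟨_, Step.parR ht⟩
    | comm hne h₁ h₂ =>
      obtain ⟨t', ht⟩ := iha h₁
      obtain ⟨u', hu⟩ := ihb h₂
      exact ⟨_, Step.comm hne ht hu⟩

/-- **Action-freeness is preserved by sound equations**: if `t ≈ u` is sound modulo
rooted weak bisimilarity and `t` is action-free, then `u` is action-free. -/
theorem stmt_16 (A : Type) (t u : Tm A)
    (hsound : EqnSound RWB t u) (haf : ActionFree t) : ActionFree u := by
  intro μ u' hstep
  have hσ : ClosedSubst (fun _ => (Tm.nil : Tm A)) := fun _ => trivial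
  obtain ⟨_, h2⟩ := hsound (fun _ => Tm.nil) hσ
  obtain ⟨p', ⟨p₁, p₂, htau, hst, _⟩, _⟩ := h2 μ _ (step_subst _ hstep)
  -- subst nil t is action-free, so after ⇒ it is still subst nil t... need: no τ steps either
  -- any step of subst nil t reflects to t, contradicting haf; TauStar from it is refl.
  have hafn : ∀ ν q, ¬ Step (subst (fun _ => (Tm.nil : Tm A)) t) ν q := by
    intro ν q h
    obtain ⟨t', ht⟩ := step_nilsubst h
    exact haf ν t' ht
  have : p₁ = subst (fun _ => (Tm.nil : Tm A)) t := by
    rcases Relation.ReflTransGen.cases_head htau with h | ⟨c, hc, _⟩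
    · exact h.symm
    · exact absurd hc (hafn _ _)
  subst this
  exact hafn _ _ hst
end

section
/- Let t and u be action-free CCS terms. If the equation t ≈ u is sound modulo rooted weak bisimilarity ∼_RWB over CCS, then it is also sound modulo bisimilarity ∼_B over CCS_A; that is, σ(t) ∼_B σ(u) for every closed substitution σ whose values are processes in which every action prefix lies in A (no co-names and no τ occur). -/
/-- A term lies in CCS_A if every prefix occurring in it is an action name in `A`
(no co-names and no τ). -/
def OnlyA {A : Type} : Tm A → Prop
  | .nil => True
  | .var _ => True
  | .pre μ t => (∃ a : A, μ = Act.name a) ∧ OnlyA t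
  | .plus t u => OnlyA t ∧ OnlyA u
  | .par t u => OnlyA t ∧ OnlyA u

lemma onlyA_step {A : Type} {p p' : Tm A} {μ : Act A} (h : Step p μ p') (hp : OnlyA p) :
    OnlyA p' ∧ ∃ a : A, μ = Act.name a := by
  induction h with
  | pre μ t => exact ⟨hp.2, hp.1⟩
  | plusL _ ih => exact ih hp.1
  | plusR _ ih => exact ih hp.2
  | parL _ ih =>
    obtain ⟨h1, h2⟩ := ih hp.1
    exact ⟨⟨h1, hp.2⟩, h2⟩
  | parR _ ih =>
    obtain ⟨h1, h2⟩ := ih hp.2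
    exact ⟨⟨hp.1, h1⟩, h2⟩
  | comm hne h1 h2 ih1 ih2 =>
    obtain ⟨_, a, rfl⟩ := ih1 hp.1
    obtain ⟨_, b, hb⟩ := ih2 hp.2
    simp [Act.co] at hb

lemma tauStar_eq {A : Type} {p q : Tm A} (hp : OnlyA p) (h : TauStar p q) : q = p := by
  induction h with
  | refl => rfl
  | tail _ hs ih =>
    subst ih
    obtain ⟨_, a, ha⟩ := onlyA_step hs hp
    exact absurd ha (by simp)

lemma weakHat_step {A : Type} {q q' : Tm A} {μ : Act A} (hq : OnlyA q)
    (h : WeakHat μ q q') : Step q μ q' := by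
  obtain ⟨p₁, p₂, h1, h2, h3⟩ := h
  have e1 := tauStar_eq hq h1; subst e1
  have e2 := tauStar_eq (onlyA_step h2 hq).1 h3; subst e2
  exact h2

lemma actionFree_onlyA {A : Type} {t : Tm A} (h : ActionFree t) : OnlyA t := by
  induction t with
  | nil => trivial
  | var x => trivial
  | pre μ t ih => exact absurd (Step.pre μ t) (h μ t)
  | plus t u iht ihu =>
    exact ⟨iht (fun μ t' hs => h μ t' (Step.plusL hs)),
           ihu (fun μ u' hs => h μ u' (Step.plusR hs))⟩
  | par t u iht ihu =>
    exact ⟨iht (fun μ t' hs => h μ (.par t' u) (Step.parL hs)),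
           ihu (fun μ u' hs => h μ (.par t u') (Step.parR hs))⟩

lemma onlyA_subst {A : Type} {t : Tm A} {σ : ℕ → Tm A} (ht : OnlyA t)
    (hσ : ∀ x, OnlyA (σ x)) : OnlyA (subst σ t) := by
  induction t with
  | nil => trivial
  | var x => exact hσ x
  | pre μ t ih => exact ⟨ht.1, ih ht.2⟩
  | plus t u iht ihu => exact ⟨iht ht.1, ihu ht.2⟩
  | par t u iht ihu => exact ⟨iht ht.1, ihu ht.2⟩

lemma WB.symm' {A : Type} {p q : Tm A} (h : WB p q) : WB q p := by
  obtain ⟨R, hR, hpq⟩ := h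
  exact ⟨R, hR, hR.1 _ _ hpq⟩

/-- **From soundness modulo `∼_RWB` to soundness modulo `∼_B` over CCS_A**: an
action-free equation that is sound modulo rooted weak bisimilarity over CCS is sound
modulo bisimilarity over CCS_A. -/
theorem stmt_17 (A : Type) (t u : Tm A) (hat : ActionFree t) (hau : ActionFree u)
    (hsound : EqnSound RWB t u) :
    ∀ σ : ℕ → Tm A, (∀ x, Closed (σ x) ∧ OnlyA (σ x)) →
      Bisim (subst σ t) (subst σ u) := by
  intro σ hσ
  refine ⟨fun p q => OnlyA p ∧ OnlyA q ∧ (WB p q ∨ RWB p q), ⟨?_, ?_⟩, ?_⟩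
  · rintro p q ⟨hp, hq, h | h⟩
    · exact ⟨hq, hp, Or.inl h.symm'⟩
    · exact ⟨hq, hp, Or.inr ⟨h.2, h.1⟩⟩
  · rintro p q μ p' ⟨hp, hq, h | h⟩ hs
    · obtain ⟨S, hS, hpq⟩ := h
      obtain ⟨_, a, rfl⟩ := onlyA_step hs hp
      rcases hS.2 p q _ p' hpq hs with ⟨hτ, _⟩ | ⟨q', hw, hS'⟩
      · exact absurd hτ (by simp)
      · rcases hw with ⟨hτ, _⟩ | ⟨_, hw⟩
        · exact absurd hτ (by simp)
        · have hsq := weakHat_step hq hw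
          exact ⟨q', hsq, (onlyA_step hs hp).1, (onlyA_step hsq hq).1,
            Or.inl ⟨S, hS, hS'⟩⟩
    · obtain ⟨q', hw, hwb⟩ := h.1 μ p' hs
      have hsq := weakHat_step hq hw
      exact ⟨q', hsq, (onlyA_step hs hp).1, (onlyA_step hsq hq).1, Or.inl hwb⟩
  · exact ⟨onlyA_subst (actionFree_onlyA hat) (fun x => (hσ x).2),
      onlyA_subst (actionFree_onlyA hau) (fun x => (hσ x).2),
      Or.inr (hsound σ (fun x => (hσ x).1))⟩
end
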